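/- arXiv:1409.6323 — 7 statements merged into one kernel-verified Lean document; each statement's English description precedes it below -/
import Mathlib

section
/- Let n ≥ 5 be odd. There exists a nonzero constant a_n, depending only on n, such that for every r > 0 and every λ ∈ ℝ with λ ≠ 0 one has (1/λ) ∂_λ g_n(λ, r) = a_n · g_{n-2}(λ, r). (This 'dimension reduction' identity expresses that applying (1/λ)d/dλ to the n-dimensional free resolvent kernel yields a constant multiple of the (n−2)-dimensional one.) -/
/-
Write `n = 2m + 3`. Then `g_n(λ, r) = C_n r^{-(2m+1)} e^{iλr} p_m(-2irλ)` for an explicit polynomial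
`p_m`, and differentiating in `λ` gives `C_n r^{-(2m+1)} e^{iλr} · ir · (p_m - 2 p_m')(-2irλ)`.
The polynomials satisfy `p_{m+1} - 2 p_{m+1}' = X p_m` (coefficientwise a factorial identity), and
`ir · (-2irλ) = 2r²λ`, so `(1/λ) ∂_λ g_{2m+5} = 2 (C_{2m+5} / C_{2m+3}) g_{2m+3}`.
-/

open MeasureTheory Complex Real Finset

/-- The Green's function constant `c₀(n) = Γ(n/2 − 1)/(4 π^{n/2})`. -/
noncomputable def green0 (n : ℕ) : ℝ :=
  Real.Gamma ((n : ℝ) / 2 - 1) / (4 * Real.pi ^ ((n : ℝ) / 2))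

/-- The constant `C_n = c₀(n) · ((n−3)/2)!/(n−3)!`. -/
noncomputable def resC (n : ℕ) : ℝ :=
  green0 n * (Nat.factorial ((n - 3) / 2)) / (Nat.factorial (n - 3))

/-- The kernel `g_n(λ, r)` of the limiting free resolvent `(−Δ − λ² − i0)^{−1}` on `ℝ^n`
for odd `n ≥ 3`. -/
noncomputable def gker (n : ℕ) (lam r : ℝ) : ℂ :=
  (resC n : ℂ) * Complex.exp (Complex.I * (lam : ℂ) * (r : ℂ)) / (r : ℂ) ^ (n - 2) *
    ∑ l ∈ Finset.range ((n - 3) / 2 + 1),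
      ((Nat.factorial (n - 3 - l) : ℂ) /
          ((Nat.factorial l : ℂ) * (Nat.factorial ((n - 3) / 2 - l) : ℂ))) *
        ((-2) * Complex.I * (r : ℂ) * (lam : ℂ)) ^ l

open Polynomial Nat

section ResolventPoly

variable (K : Type*) [Field K]

noncomputable def resolventCoeff (m l : ℕ) : K :=
  ((2 * m - l)! : K) / ((l ! : K) * ((m - l)! : K))

/-- `p_m(z) = 2^m θ_m(z/2)`, where `θ_m` is the reverse Bessel polynomial. -/
noncomputable def resolventPoly (m : ℕ) : K[X] :=
  ∑ l ∈ range (m + 1), C (resolventCoeff K m l) * X ^ l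

variable {K}

theorem coeff_resolventPoly (m k : ℕ) :
    (resolventPoly K m).coeff k = if k ≤ m then resolventCoeff K m k else 0 := by
  simp [resolventPoly]

variable [CharZero K]

theorem resolventCoeff_self (m : ℕ) : resolventCoeff K m m = 1 := by
  simp [resolventCoeff, two_mul, factorial_ne_zero]

theorem resolventCoeff_succ_zero (m : ℕ) :
    resolventCoeff K (m + 1) 0 = 2 * resolventCoeff K (m + 1) 1 := by
  have h : 2 * (m + 1) = (2 * m + 1) + 1 := by ring
  simp only [resolventCoeff, h, Nat.add_sub_cancel, Nat.sub_zero, factorial_succ]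
  push_cast
  field_simp
  ring

theorem resolventCoeff_recurrence (k p : ℕ) :
    resolventCoeff K (k + p + 2) (k + 1) - 2 * (k + 2) * resolventCoeff K (k + p + 2) (k + 2) =
      resolventCoeff K (k + p + 1) k := by
  have e1 : 2 * (k + p + 2) - (k + 1) = k + 2 * p + 2 + 1 := by omega
  have e2 : 2 * (k + p + 2) - (k + 2) = k + 2 * p + 2 := by omega
  have e3 : 2 * (k + p + 1) - k = k + 2 * p + 2 := by omega
  have e4 : k + p + 2 - (k + 1) = p + 1 := by omega
  have e5 : k + p + 2 - (k + 2) = p := by omega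
  have e6 : k + p + 1 - k = p + 1 := by omega
  have hk1 : (k : K) + 1 ≠ 0 := by exact_mod_cast k.succ_ne_zero
  have hk2 : (k : K) + 1 + 1 ≠ 0 := by exact_mod_cast (k + 1).succ_ne_zero
  rw [resolventCoeff, resolventCoeff, resolventCoeff, e1, e2, e3, e4, e5, e6,
    factorial_succ (k + 2 * p + 2), factorial_succ (k + 1), factorial_succ k, factorial_succ p]
  push_cast
  field_simp
  ring

theorem resolventPoly_succ_sub_two_mul_derivative (m : ℕ) :
    resolventPoly K (m + 1) - 2 * derivative (resolventPoly K (m + 1)) =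
      X * resolventPoly K m := by
  ext k
  rcases k with _ | k
  · simp [coeff_resolventPoly, coeff_derivative, resolventCoeff_succ_zero]
  · simp only [coeff_sub, coeff_ofNat_mul, coeff_derivative, coeff_X_mul, coeff_resolventPoly]
    rcases lt_trichotomy k m with h | rfl | h
    · obtain ⟨p, rfl⟩ : ∃ p, m = k + p + 1 := ⟨m - (k + 1), by omega⟩
      rw [if_pos (by omega), if_pos (by omega), if_pos (by omega), ← resolventCoeff_recurrence]
      push_cast
      ring
    · simp [resolventCoeff_self]
    · simp [show ¬ k ≤ m by omega, show ¬ k + 1 + 1 ≤ m + 1 by omega]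

end ResolventPoly

theorem hasDerivAt_exp_mul_eval (p : ℂ[X]) (r t : ℝ) :
    HasDerivAt (fun s : ℝ => cexp (I * s * r) * p.eval (-2 * I * r * s))
      (I * r * (cexp (I * t * r) * (p - 2 * derivative p).eval (-2 * I * r * t))) t := by
  have hexp : HasDerivAt (fun z : ℂ => cexp (I * z * r)) (cexp (I * t * r) * (I * r)) t := by
    simpa using (((hasDerivAt_id (t : ℂ)).const_mul I).mul_const (r : ℂ)).cexp
  have hpoly : HasDerivAt (fun z : ℂ => p.eval (-2 * I * r * z))
      ((derivative p).eval (-2 * I * r * t) * (-2 * I * r)) t :=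
    (p.hasDerivAt _).comp (t : ℂ) (hasDerivAt_const_mul _)
  refine (hexp.mul hpoly).comp_ofReal.congr_deriv ?_
  simp only [eval_sub, eval_mul, eval_ofNat]
  ring

theorem resC_pos {n : ℕ} (hn : 3 ≤ n) : 0 < resC n := by
  have hΓ : 0 < Real.Gamma ((n : ℝ) / 2 - 1) := by
    apply Real.Gamma_pos_of_pos
    have : (3 : ℝ) ≤ n := by exact_mod_cast hn
    linarith
  unfold resC green0
  positivity

theorem gker_two_mul_add_three (m : ℕ) (lam r : ℝ) :
    gker (2 * m + 3) lam r =
      resC (2 * m + 3) / (r : ℂ) ^ (2 * m + 1) *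
        (cexp (I * lam * r) * (resolventPoly ℂ m).eval (-2 * I * r * lam)) := by
  have h3 : 2 * m + 3 - 3 = 2 * m := by omega
  have h2 : 2 * m + 3 - 2 = 2 * m + 1 := by omega
  have hm : 2 * m / 2 = m := by omega
  simp only [gker, h3, h2, hm, resolventPoly, resolventCoeff, eval_finsetSum, eval_mul, eval_C,
    eval_pow, eval_X]
  ring

theorem hasDerivAt_gker (m : ℕ) {r : ℝ} (hr : r ≠ 0) (lam : ℝ) :
    HasDerivAt (fun t : ℝ => gker (2 * m + 5) t r)
      (2 * lam * (resC (2 * m + 5) / resC (2 * m + 3)) * gker (2 * m + 3) lam r) lam := by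
  have h5 : 2 * m + 5 = 2 * (m + 1) + 3 := by ring
  have hC : (resC (2 * m + 3) : ℂ) ≠ 0 := by exact_mod_cast (resC_pos (by omega)).ne'
  simp only [h5, gker_two_mul_add_three]
  refine ((hasDerivAt_exp_mul_eval (resolventPoly ℂ (m + 1)) r lam).const_mul
    ((resC (2 * (m + 1) + 3) : ℂ) / (r : ℂ) ^ (2 * (m + 1) + 1))).congr_deriv ?_
  rw [resolventPoly_succ_sub_two_mul_derivative, eval_mul, eval_X]
  have hr' : (r : ℂ) ≠ 0 := by exact_mod_cast hr
  field_simp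
  rw [I_sq]
  ring

/-- Dimension reduction identity: `(1/λ) ∂_λ g_n(λ, r) = a_n · g_{n−2}(λ, r)` for some
nonzero constant `a_n` depending only on `n`. -/
theorem dimension_reduction (n : ℕ) (hn : 5 ≤ n) (hodd : Odd n) :
    ∃ a : ℝ, a ≠ 0 ∧ ∀ r : ℝ, 0 < r → ∀ lam : ℝ, lam ≠ 0 →
      (1 / (lam : ℂ)) * deriv (fun t : ℝ => gker n t r) lam =
        (a : ℂ) * gker (n - 2) lam r := by
  obtain ⟨m, rfl⟩ : ∃ m, n = 2 * m + 5 := by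
    obtain ⟨k, rfl⟩ := hodd
    exact ⟨k - 2, by omega⟩
  have h5 := resC_pos (n := 2 * m + 5) (by omega)
  have h3 := resC_pos (n := 2 * m + 3) (by omega)
  refine ⟨2 * (resC (2 * m + 5) / resC (2 * m + 3)), by positivity, fun r hr lam hlam => ?_⟩
  rw [(hasDerivAt_gker m hr.ne' lam).deriv, show 2 * m + 5 - 2 = 2 * m + 3 by omega]
  have : (lam : ℂ) ≠ 0 := by exact_mod_cast hlam
  push_cast
  field_simp
end

section
/- Let n ≥ 5 be odd. There is a constant C, depending only on n, such that for every integer k with 0 ≤ k ≤ (n−1)/2, every 0 < λ ≤ 1 and every r > 0 with λr ≥ 1, one has |∂_λ^k g_n(λ, r)| ≤ C λ^{n−2−k}. Moreover, for every integer k ≥ (n+3)/2 there is a constant C_k, depending only on n and k, such that for all λ > 0 and r > 0 with λr ≥ 1, |∂_λ^k g_n(λ, r)| ≤ C_k λ^{(n−3)/2} r^{k − (n−1)/2}. -/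
open MeasureTheory Complex Real Finset

/-!
Up to the factor `r^{-(n-2)}`, `g_n(·, r)` is a polynomial of degree `(n-3)/2` in `λ`, with
coefficients `a_l r^l`, times `e^{iλr}`. By the Leibniz rule `∂_λ^k (λ^l e^{iλr})` is a
combination of `λ^{l-i} (ir)^{k-i} e^{iλr}`, so `|∂_λ^k g_n|` is bounded by a constant times
the largest of the sizes `λ^{l-i} r^{l+k-i-(n-2)}`, `i ≤ l ≤ (n-3)/2`. As `λr ≥ 1`, multiplying
such a size by `(λr)^d`, `d ≥ 0`, can only increase it; raising the power of `λ` to `n-2-k` (which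
makes the power of `r` vanish when `k ≤ (n-1)/2`) or to `(n-3)/2` gives the two bounds.
-/

theorem iteratedDeriv_comp_ofReal {f : ℂ → ℂ} (hf : ContDiff ℂ ⊤ f) (k : ℕ) (x : ℝ) :
    iteratedDeriv k (fun t : ℝ => f t) x = iteratedDeriv k f x := by
  induction k generalizing x with
  | zero => simp
  | succ k ih =>
    have hdiff : DifferentiableAt ℂ (iteratedDeriv k f) x :=
      (hf.differentiable_iteratedDeriv k (by simp)).differentiableAt
    rw [iteratedDeriv_succ, funext ih, hdiff.hasDerivAt.comp_ofReal.deriv, iteratedDeriv_succ]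

theorem iteratedDeriv_pow_mul_cexp (c : ℂ) (l k : ℕ) (z : ℂ) :
    iteratedDeriv k (fun z => z ^ l * exp (c * z)) z =
      ∑ i ∈ range (k + 1), (k.choose i * l.descFactorial i : ℂ) *
        (z ^ (l - i) * c ^ (k - i) * exp (c * z)) := by
  rw [iteratedDeriv_fun_mul (by fun_prop) (by fun_prop)]
  refine sum_congr rfl fun i _ => ?_
  simp only [iteratedDeriv_pow, iteratedDeriv_cexp_const_mul]
  ring

noncomputable def gkerCoeff (n l : ℕ) : ℂ :=
  resC n * ((n - 3 - l).factorial / (l.factorial * ((n - 3) / 2 - l).factorial)) * (-2 * I) ^ l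

theorem gker_eq_sum (n : ℕ) (lam r : ℝ) :
    gker n lam r = ∑ l ∈ range ((n - 3) / 2 + 1),
      gkerCoeff n l * r ^ l / r ^ (n - 2) * ((lam : ℂ) ^ l * exp (I * r * lam)) := by
  rw [gker, mul_sum]
  refine sum_congr rfl fun l _ => ?_
  rw [gkerCoeff]
  ring_nf

theorem iteratedDeriv_gker (n k : ℕ) (lam r : ℝ) :
    iteratedDeriv k (fun t => gker n t r) lam = ∑ l ∈ range ((n - 3) / 2 + 1),
      gkerCoeff n l * r ^ l / r ^ (n - 2) * ∑ i ∈ range (k + 1),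
        (k.choose i * l.descFactorial i : ℂ) *
          ((lam : ℂ) ^ (l - i) * (I * r) ^ (k - i) * exp (I * r * lam)) := by
  let G : ℂ → ℂ := fun z => ∑ l ∈ range ((n - 3) / 2 + 1),
    gkerCoeff n l * r ^ l / r ^ (n - 2) * (z ^ l * exp (I * r * z))
  have hG : (fun t => gker n t r) = fun t : ℝ => G t := funext (gker_eq_sum n · r)
  have hGsmooth : ContDiff ℂ ⊤ G := by fun_prop
  rw [hG, iteratedDeriv_comp_ofReal hGsmooth,
    iteratedDeriv_fun_sum fun _ _ => by fun_prop]
  refine sum_congr rfl fun l _ => ?_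
  rw [iteratedDeriv_const_mul_field, iteratedDeriv_pow_mul_cexp]

/-- Size of the term `λ^{l-i} (ir)^{k-i} e^{iλr}` of the Leibniz expansion of `∂_λ^k (λ^l e^{iλr})`,
times the weight `r^{l-(n-2)}` of `λ^l e^{iλr}` in `g_n(λ, r)`. -/
noncomputable def derivTermSize (n k l i : ℕ) (lam r : ℝ) : ℝ :=
  lam ^ ((l : ℝ) - i) * r ^ ((l : ℝ) + k - i - (n - 2))

theorem norm_gker_term (n k l i : ℕ) (hn : 2 ≤ n) (hil : i ≤ l) (hik : i ≤ k) {lam r : ℝ}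
    (hlam : 0 < lam) (hr : 0 < r) :
    ‖gkerCoeff n l * r ^ l / r ^ (n - 2) * ((k.choose i * l.descFactorial i : ℂ) *
        ((lam : ℂ) ^ (l - i) * (I * r) ^ (k - i) * exp (I * r * lam)))‖ =
      ‖gkerCoeff n l‖ * (k.choose i * l.descFactorial i) *
        derivTermSize n k l i lam r := by
  have hexp : (lam : ℝ) ^ ((l : ℝ) - i) = lam ^ (l - i) := by
    rw [← Nat.cast_sub hil, rpow_natCast]
  have hr_exp : r ^ ((l : ℝ) + k - i - (n - 2)) = r ^ l * r ^ (k - i) / r ^ (n - 2) := by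
    rw [show (l : ℝ) + k - i - (n - 2) = ((l + (k - i) : ℕ) : ℝ) - ((n - 2 : ℕ) : ℝ) by
      push_cast [Nat.cast_sub hik, Nat.cast_sub hn]; ring, rpow_sub hr, rpow_natCast, rpow_natCast,
      pow_add]
  have hunimod : ‖exp (I * r * lam)‖ = 1 := by
    rw [mul_assoc, ← ofReal_mul, mul_comm, norm_exp_ofReal_mul_I]
  rw [derivTermSize, hexp, hr_exp]
  simp only [norm_mul, norm_div, norm_pow, norm_real, Complex.norm_natCast, norm_I, hunimod,
    Real.norm_eq_abs, abs_of_pos hr, abs_of_pos hlam]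
  ring

theorem norm_iteratedDeriv_gker_le (n k : ℕ) (hn : 2 ≤ n) :
    ∃ C : ℝ, 0 < C ∧ ∀ lam r T : ℝ, 0 < lam → 0 < r → 0 ≤ T →
      (∀ l i : ℕ, l ≤ (n - 3) / 2 → i ≤ l → derivTermSize n k l i lam r ≤ T) →
      ‖iteratedDeriv k (fun t => gker n t r) lam‖ ≤ C * T := by
  set A : ℝ := ∑ l ∈ range ((n - 3) / 2 + 1), ∑ i ∈ range (k + 1),
    ‖gkerCoeff n l‖ * (k.choose i * l.descFactorial i)
  refine ⟨A + 1, by positivity, fun lam r T hlam hr hT hterm => ?_⟩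
  have hterm_le : ∀ l ∈ range ((n - 3) / 2 + 1), ∀ i ∈ range (k + 1),
      ‖gkerCoeff n l * r ^ l / r ^ (n - 2) * ((k.choose i * l.descFactorial i : ℂ) *
        ((lam : ℂ) ^ (l - i) * (I * r) ^ (k - i) * exp (I * r * lam)))‖ ≤
      ‖gkerCoeff n l‖ * (k.choose i * l.descFactorial i) * T := by
    intro l hl i hi
    rw [mem_range, Nat.lt_succ_iff] at hl hi
    rcases lt_or_ge l i with hli | hil
    · simp [Nat.descFactorial_eq_zero_iff_lt.mpr hli]
    · rw [norm_gker_term n k l i hn hil hi hlam hr]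
      gcongr
      exact hterm l i hl hil
  rw [iteratedDeriv_gker]
  simp_rw [mul_sum]
  calc _ ≤ _ := (norm_sum_le _ _).trans (sum_le_sum fun l _ => norm_sum_le _ _)
    _ ≤ _ := sum_le_sum fun l hl => sum_le_sum fun i hi => hterm_le l hl i hi
    _ = A * T := by simp_rw [A, sum_mul]
    _ ≤ (A + 1) * T := by gcongr; linarith

theorem rpow_mul_rpow_le_rpow_add_mul_rpow_add {x y d : ℝ} (p q : ℝ) (hx : 0 < x) (hy : 0 < y)
    (hxy : 1 ≤ x * y) (hd : 0 ≤ d) : x ^ p * y ^ q ≤ x ^ (p + d) * y ^ (q + d) :=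
  calc x ^ p * y ^ q = x ^ p * y ^ q * 1 := (mul_one _).symm
    _ ≤ x ^ p * y ^ q * (x * y) ^ d := by gcongr; exact one_le_rpow hxy hd
    _ = x ^ (p + d) * y ^ (q + d) := by rw [rpow_add hx, rpow_add hy, mul_rpow hx.le hy.le]; ring

theorem derivTermSize_le_of_le_half {n k l i : ℕ} (hn : 3 ≤ n) (hodd : Odd n) (hl : l ≤ (n - 3) / 2)
    (hk : k ≤ (n - 1) / 2) {lam r : ℝ} (hlam : 0 < lam) (hr : 0 < r) (h1 : 1 ≤ lam * r) :
    derivTermSize n k l i lam r ≤ lam ^ ((n : ℝ) - 2 - k) := by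
  have hlk : (l : ℝ) + k + 2 ≤ n := by
    obtain ⟨w, rfl⟩ := hodd
    exact_mod_cast (by omega : l + k + 2 ≤ 2 * w + 1)
  calc derivTermSize n k l i lam r
        ≤ lam ^ ((l : ℝ) - i + (n - 2 - l - k + i)) *
            r ^ ((l : ℝ) + k - i - (n - 2) + (n - 2 - l - k + i)) :=
        rpow_mul_rpow_le_rpow_add_mul_rpow_add _ _ hlam hr h1 (by linarith)
    _ = lam ^ ((n : ℝ) - 2 - k) * r ^ (0 : ℝ) := by ring_nf
    _ = lam ^ ((n : ℝ) - 2 - k) := by rw [rpow_zero, mul_one]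

theorem derivTermSize_le_mul_rpow {n k l i : ℕ} (hn : 3 ≤ n) (hodd : Odd n) (hl : l ≤ (n - 3) / 2)
    (hil : i ≤ l) {lam r : ℝ} (hlam : 0 < lam) (hr : 0 < r) (h1 : 1 ≤ lam * r) :
    derivTermSize n k l i lam r ≤
      lam ^ (((n : ℝ) - 3) / 2) * r ^ ((k : ℝ) - ((n : ℝ) - 1) / 2) := by
  have hl' : 2 * (l : ℝ) + 3 ≤ n := by
    obtain ⟨w, rfl⟩ := hodd
    exact_mod_cast (by omega : 2 * l + 3 ≤ 2 * w + 1)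
  have hil' : (i : ℝ) ≤ l := by exact_mod_cast hil
  calc derivTermSize n k l i lam r
        ≤ lam ^ ((l : ℝ) - i + ((n - 3) / 2 - l + i)) *
            r ^ ((l : ℝ) + k - i - (n - 2) + ((n - 3) / 2 - l + i)) :=
        rpow_mul_rpow_le_rpow_add_mul_rpow_add _ _ hlam hr h1 (by linarith)
    _ = _ := by ring_nf

/-- Derivative bounds for the free resolvent kernel in the regime `λ r ≥ 1`:
for `0 ≤ k ≤ (n−1)/2` and `0 < λ ≤ 1`, `|∂_λ^k g_n(λ,r)| ≤ C λ^{n−2−k}`; and for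
`k ≥ (n+3)/2`, `|∂_λ^k g_n(λ,r)| ≤ C_k λ^{(n−3)/2} r^{k−(n−1)/2}`. -/
theorem resolvent_derivative_bounds (n : ℕ) (hn : 5 ≤ n) (hodd : Odd n) :
    (∃ C : ℝ, 0 < C ∧ ∀ k : ℕ, k ≤ (n - 1) / 2 → ∀ lam : ℝ, 0 < lam → lam ≤ 1 →
        ∀ r : ℝ, 0 < r → 1 ≤ lam * r →
          ‖iteratedDeriv k (fun t : ℝ => gker n t r) lam‖ ≤
            C * lam ^ ((n : ℝ) - 2 - (k : ℝ))) ∧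
    (∀ k : ℕ, (n + 3) / 2 ≤ k → ∃ C : ℝ, 0 < C ∧ ∀ lam : ℝ, 0 < lam →
        ∀ r : ℝ, 0 < r → 1 ≤ lam * r →
          ‖iteratedDeriv k (fun t : ℝ => gker n t r) lam‖ ≤
            C * lam ^ (((n : ℝ) - 3) / 2) * r ^ ((k : ℝ) - ((n : ℝ) - 1) / 2)) := by
  have hn3 : 3 ≤ n := by omega
  constructor
  · choose C hCpos hC using fun k => norm_iteratedDeriv_gker_le n k (by omega)
    refine ⟨∑ k ∈ range ((n - 1) / 2 + 1), C k, sum_pos (fun k _ => hCpos k) ⟨0, by simp⟩, ?_⟩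
    intro k hk lam hlam _ r hr h1
    calc _ ≤ C k * lam ^ ((n : ℝ) - 2 - k) :=
          hC k lam r _ hlam hr (by positivity) fun l i hl _ =>
            derivTermSize_le_of_le_half hn3 hodd hl hk hlam hr h1
      _ ≤ _ := by
          gcongr
          exact single_le_sum (fun k _ => (hCpos k).le) (mem_range.mpr (by omega))
  · intro k _
    obtain ⟨C, hCpos, hC⟩ := norm_iteratedDeriv_gker_le n k (by omega)
    refine ⟨C, hCpos, fun lam hlam r hr h1 => ?_⟩
    rw [mul_assoc]
    exact hC lam r _ hlam hr (by positivity) fun l i hl hil =>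
      derivTermSize_le_mul_rpow hn3 hodd hl hil hlam hr h1
end

section
/- Let n ≥ 5 be odd, and for each fixed r > 0 let T_m(λ, r) denote the degree-m Taylor polynomial in λ at λ = 0 of the (entire) function λ ↦ g_n(λ, r). Then for every ℓ with 0 ≤ ℓ ≤ 1 there is a constant C, depending only on n and ℓ, such that for all 0 < λ ≤ 1 and all r > 0: (i) |∂_λ^j (g_n − T_{n−2})(λ, r)| ≤ C r^ℓ λ^{n−2+ℓ−j} for all integers 0 ≤ j ≤ (n−1)/2; (ii) |∂_λ^j (g_n − T_{n−1})(λ, r)| ≤ C r^{1+ℓ} λ^{n−1+ℓ−j} for all integers 0 ≤ j ≤ (n+1)/2; (iii) |∂_λ^j (g_n − T_n)(λ, r)| ≤ C r^{2+ℓ} λ^{n+ℓ−j} for all integers 0 ≤ j ≤ (n+3)/2; (iv) |∂_λ^j (g_n − T_{n+2})(λ, r)| ≤ C r^{4+ℓ} λ^{n+2+ℓ−j} for all integers 0 ≤ j ≤ (n+7)/2. -/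
open MeasureTheory Complex Real Finset

/-- The degree-`m` Taylor polynomial in `λ` at `λ = 0` of `λ ↦ g_n(λ, r)`. -/
noncomputable def gTaylor (n m : ℕ) (lam r : ℝ) : ℂ :=
  ∑ i ∈ Finset.range (m + 1),
    (iteratedDeriv i (fun t : ℝ => gker n t r) 0) * (lam : ℂ) ^ i / (Nat.factorial i : ℂ)


noncomputable def Pfun (N : ℕ) (c : ℕ → ℂ) (u : ℝ) : ℂ := ∑ k ∈ Finset.range (N+1), c k * (u:ℂ)^k
noncomputable def Efun (N : ℕ) (c : ℕ → ℂ) (u : ℝ) : ℂ := Complex.exp (Complex.I * u) * Pfun N c u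
noncomputable def Sop (c : ℕ → ℂ) : ℕ → ℂ := fun k => (k+1) * c (k+1)
noncomputable def Dop (c : ℕ → ℂ) : ℕ → ℂ := fun k => Complex.I * c k + (k+1) * c (k+1)

lemma hasDerivAt_mono (k : ℕ) (u : ℝ) :
    HasDerivAt (fun u : ℝ => ((u:ℂ))^k) ((k:ℂ) * (u:ℂ)^(k-1)) u :=
  (hasDerivAt_pow k (u:ℂ)).comp_ofReal

lemma hasDerivAt_Pfun (N : ℕ) (c : ℕ → ℂ) (hc : c (N+1) = 0) (u : ℝ) :
    HasDerivAt (Pfun N c) (Pfun N (Sop c) u) u := by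
  have h : HasDerivAt (Pfun N c) (∑ k ∈ range (N+1), c k * ((k:ℂ) * (u:ℂ)^(k-1))) u :=
    HasDerivAt.fun_sum fun k _ => (hasDerivAt_mono k u).const_mul (c k)
  convert h using 1
  simp only [Pfun, Sop]
  rw [Finset.sum_range_succ, Finset.sum_range_succ' (fun k => c k * ((k:ℂ) * (u:ℂ)^(k-1))) N]
  simp only [hc, Nat.cast_zero, zero_mul, mul_zero, add_zero, zero_add]
  refine Finset.sum_congr rfl fun k _ => ?_
  have : (k + 1) - 1 = k := rfl
  rw [this]
  push_cast
  ring

lemma hasDerivAt_cexp (u : ℝ) :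
    HasDerivAt (fun u : ℝ => Complex.exp (Complex.I * u)) (Complex.I * Complex.exp (Complex.I * u)) u := by
  have h1 : HasDerivAt (fun z : ℂ => Complex.exp (Complex.I * z)) (Complex.exp (Complex.I * u) * Complex.I) u := by
    simpa [Function.comp_def] using (Complex.hasDerivAt_exp (Complex.I * u)).comp (u:ℂ)
      ((hasDerivAt_id (u:ℂ)).const_mul Complex.I)
  have h2 := h1.comp_ofReal
  rwa [mul_comm] at h2

lemma hasDerivAt_Efun (N : ℕ) (c : ℕ → ℂ) (hc : c (N+1) = 0) (u : ℝ) :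
    HasDerivAt (Efun N c) (Efun N (Dop c) u) u := by
  have h := (hasDerivAt_cexp u).mul (hasDerivAt_Pfun N c hc u)
  refine h.congr_deriv ?_
  symm
  simp only [Efun, Dop, Pfun, Sop]
  rw [Finset.mul_sum, Finset.mul_sum, Finset.mul_sum, ← Finset.sum_add_distrib]
  exact Finset.sum_congr rfl fun k _ => by ring

lemma contDiff_Pfun (N : ℕ) (c : ℕ → ℂ) : ContDiff ℝ (⊤ : ℕ∞) (Pfun N c) := by
  apply ContDiff.sum (fun k _ => ?_)
  exact contDiff_const.mul (Complex.ofRealCLM.contDiff.pow k)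

lemma contDiff_Efun (N : ℕ) (c : ℕ → ℂ) : ContDiff ℝ (⊤ : ℕ∞) (Efun N c) := by
  refine ContDiff.mul ?_ (contDiff_Pfun N c)
  have h1 : ContDiff ℝ (⊤ : ℕ∞) (Complex.exp) := Complex.contDiff_exp
  exact h1.comp (contDiff_const.mul Complex.ofRealCLM.contDiff)

-- vanishing lemmas
lemma Sop_iter_vanish (M : ℕ) : ∀ (j : ℕ) (c : ℕ → ℂ), (∀ k, M < k → c k = 0) →
    ∀ k, M < k + j → (Sop^[j] c) k = 0 := by
  intro j
  induction j with
  | zero => intro c h k hk; simpa using h k (by omega)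
  | succ j ih =>
    intro c h k hk
    rw [Function.iterate_succ_apply']
    simp only [Sop]
    rw [ih c h (k+1) (by omega)]
    ring

lemma Dop_iter_vanish (M : ℕ) (j : ℕ) (c : ℕ → ℂ) (h : ∀ k, M < k → c k = 0) :
    ∀ k, M < k → (Dop^[j] c) k = 0 := by
  induction j with
  | zero => simpa using h
  | succ j ih =>
    intro k hk
    rw [Function.iterate_succ_apply']
    simp only [Dop]
    rw [ih k hk, ih (k+1) (by omega)]
    ring

lemma Sop_vanish (M : ℕ) (c : ℕ → ℂ) (h : ∀ k, M < k → c k = 0) (k : ℕ) (hk : M < k + 1) :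
    Sop c k = 0 := by
  simp only [Sop, h (k+1) (by omega)]; ring

lemma norm_Pfun_le (N d' : ℕ) (c : ℕ → ℂ) (h : ∀ k, d' < k → c k = 0) (u : ℝ) (hu : 0 ≤ u) :
    ‖Pfun N c u‖ ≤ (∑ k ∈ range (N+1), ‖c k‖) * (max 1 u)^d' := by
  rw [Pfun, Finset.sum_mul]
  refine (norm_sum_le _ _).trans (Finset.sum_le_sum fun k _ => ?_)
  rw [norm_mul, norm_pow, Complex.norm_real, Real.norm_eq_abs, _root_.abs_of_nonneg hu]
  by_cases hk : k ≤ d'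
  · refine mul_le_mul_of_nonneg_left ?_ (norm_nonneg _)
    calc u^k ≤ (max 1 u)^k := pow_le_pow_left₀ hu (le_max_right 1 u) k
    _ ≤ (max 1 u)^d' := pow_le_pow_right₀ (le_max_left 1 u) hk
  · simp only [h k (by omega), norm_zero, zero_mul]
    positivity

lemma norm_Efun_eq (N : ℕ) (c : ℕ → ℂ) (u : ℝ) : ‖Efun N c u‖ = ‖Pfun N c u‖ := by
  rw [Efun, norm_mul]
  have : ‖Complex.exp (Complex.I * u)‖ = 1 := by
    rw [Complex.norm_exp]
    simp
  rw [this, one_mul]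

lemma norm_Efun_le (N d' : ℕ) (c : ℕ → ℂ) (h : ∀ k, d' < k → c k = 0) (u : ℝ) (hu : 0 ≤ u) :
    ‖Efun N c u‖ ≤ (∑ k ∈ range (N+1), ‖c k‖) * (max 1 u)^d' := by
  rw [norm_Efun_eq]; exact norm_Pfun_le N d' c h u hu

lemma deriv_EP (N M : ℕ) (c b : ℕ → ℂ) (hc : ∀ k, N < k → c k = 0) (hb : ∀ k, M < k → b k = 0) :
    deriv (fun u => Efun N c u - Pfun M b u) = fun u => Efun N (Dop c) u - Pfun M (Sop b) u := by
  funext u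
  exact ((hasDerivAt_Efun N c (hc _ (by omega)) u).sub (hasDerivAt_Pfun M b (hb _ (by omega)) u)).deriv

lemma iteratedDeriv_EP (j : ℕ) : ∀ (N M : ℕ) (c b : ℕ → ℂ), (∀ k, N < k → c k = 0) →
    (∀ k, M < k → b k = 0) →
    iteratedDeriv j (fun u => Efun N c u - Pfun M b u)
      = fun u => Efun N (Dop^[j] c) u - Pfun M (Sop^[j] b) u := by
  induction j with
  | zero => intro N M c b _ _; simp [iteratedDeriv_zero]
  | succ j ih =>
    intro N M c b hc hb
    rw [iteratedDeriv_succ', deriv_EP N M c b hc hb,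
      ih N M (Dop c) (Sop b) (fun k hk => Dop_iter_vanish N 1 c hc k hk)
        (fun k hk => Sop_vanish M b hb k (by omega)),
      Function.iterate_succ_apply, Function.iterate_succ_apply]

lemma deriv_E (N : ℕ) (c : ℕ → ℂ) (hc : ∀ k, N < k → c k = 0) :
    deriv (Efun N c) = Efun N (Dop c) := by
  funext u
  exact (hasDerivAt_Efun N c (hc _ (by omega)) u).deriv

lemma iteratedDeriv_E (j : ℕ) : ∀ (N : ℕ) (c : ℕ → ℂ), (∀ k, N < k → c k = 0) →
    iteratedDeriv j (Efun N c) = Efun N (Dop^[j] c) := by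
  induction j with
  | zero => intro N c _; simp [iteratedDeriv_zero]
  | succ j ih =>
    intro N c hc
    rw [iteratedDeriv_succ', deriv_E N c hc,
      ih N (Dop c) (fun k hk => Dop_iter_vanish N 1 c hc k hk),
      Function.iterate_succ_apply]

noncomputable def bfun (dd : ℕ) (c : ℕ → ℂ) (N : ℕ) : ℕ → ℂ :=
  fun i => if i ≤ N then Efun dd (Dop^[i] c) 0 / (Nat.factorial i : ℂ) else 0

lemma bfun_vanish (dd : ℕ) (c : ℕ → ℂ) (N : ℕ) : ∀ k, N < k → bfun dd c N k = 0 := by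
  intro k hk; simp [bfun, Nat.not_le.mpr hk]

lemma Pfun_zero (N : ℕ) (c : ℕ → ℂ) : Pfun N c 0 = c 0 := by
  rw [Pfun, Finset.sum_eq_single 0]
  · simp
  · intro k _ hk
    rw [Complex.ofReal_zero, zero_pow hk, mul_zero]
  · intro h; simp at h

lemma Efun_zero (N : ℕ) (c : ℕ → ℂ) : Efun N c 0 = c 0 := by
  rw [Efun, Pfun_zero]
  simp

lemma Sop_bfun (dd : ℕ) (c : ℕ → ℂ) (N : ℕ) :
    Sop (bfun dd c (N+1)) = bfun dd (Dop c) N := by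
  funext k
  simp only [Sop, bfun]
  by_cases hk : k ≤ N
  · rw [if_pos (by omega : k + 1 ≤ N + 1), if_pos hk, Function.iterate_succ_apply,
      Nat.factorial_succ]
    have hne : ((k:ℂ) + 1) ≠ 0 := by
      exact_mod_cast (Nat.succ_ne_zero k)
    have hfac : (Nat.factorial k : ℂ) ≠ 0 := by
      exact_mod_cast Nat.factorial_ne_zero k
    push_cast
    field_simp
  · rw [if_neg (by omega : ¬ (k + 1 ≤ N + 1)), if_neg hk, mul_zero]

lemma Pfun_ext_of_vanish (N M : ℕ) (hNM : N ≤ M) (b : ℕ → ℂ) (h : ∀ k, N < k → b k = 0)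
    (u : ℝ) : Pfun M b u = Pfun N b u := by
  rw [Pfun, Pfun]
  refine (Finset.sum_subset (Finset.range_subset_range.mpr (by omega)) ?_).symm
  intro k _ hk
  simp only [Finset.mem_range] at hk
  rw [h k (by omega), zero_mul]

lemma remainder_bound (dd : ℕ) (K : ℝ) :
    ∀ (N : ℕ) (c : ℕ → ℂ), (∀ k, dd < k → c k = 0) →
    (∀ t ∈ Set.Icc (0:ℝ) 1, ‖Efun dd (Dop^[N+1] c) t‖ ≤ K) →
    ∀ u ∈ Set.Icc (0:ℝ) 1, ‖Efun dd c u - Pfun N (bfun dd c N) u‖ ≤ K * u^(N+1) := by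
  intro N
  induction N with
  | zero =>
    intro c hc hK u hu
    have hg0 : Efun dd c 0 - Pfun 0 (bfun dd c 0) 0 = 0 := by
      rw [Efun_zero, Pfun_zero, bfun]
      simp [Efun_zero]
    have hd : ∀ t ∈ Set.Icc (0:ℝ) u, HasDerivWithinAt
        (fun t => Efun dd c t - Pfun 0 (bfun dd c 0) t)
        (Efun dd (Dop c) t - Pfun 0 (Sop (bfun dd c 0)) t) (Set.Icc 0 u) t := by
      intro t _
      exact ((hasDerivAt_Efun dd c (hc _ (by omega)) t).sub
        (hasDerivAt_Pfun 0 (bfun dd c 0) (bfun_vanish dd c 0 1 (by omega)) t)).hasDerivWithinAt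
    have hbd : ∀ t ∈ Set.Ico (0:ℝ) u,
        ‖Efun dd (Dop c) t - Pfun 0 (Sop (bfun dd c 0)) t‖ ≤ K := by
      intro t ht
      have hP : Pfun 0 (Sop (bfun dd c 0)) t = 0 := by
        rw [Pfun]
        simp [Sop, bfun_vanish dd c 0 1 (by omega)]
      rw [hP, sub_zero]
      exact hK t ⟨ht.1, le_trans (le_of_lt ht.2) hu.2⟩
    have := norm_image_sub_le_of_norm_deriv_le_segment' hd hbd u
      (Set.right_mem_Icc.mpr hu.1)
    rw [hg0, sub_zero, sub_zero] at this
    simpa using this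
  | succ N ih =>
    intro c hc hK u hu
    have hg0 : Efun dd c 0 - Pfun (N+1) (bfun dd c (N+1)) 0 = 0 := by
      rw [Efun_zero, Pfun_zero, bfun]
      simp [Efun_zero]
    have hK0 : 0 ≤ K := le_trans (norm_nonneg _) (hK 0 (by norm_num))
    have hPrw : ∀ t : ℝ, Pfun (N+1) (Sop (bfun dd c (N+1))) t
        = Pfun N (bfun dd (Dop c) N) t := by
      intro t
      rw [Sop_bfun]
      exact Pfun_ext_of_vanish N (N+1) (by omega) _ (bfun_vanish dd (Dop c) N) t
    have hd : ∀ t ∈ Set.Icc (0:ℝ) u, HasDerivWithinAt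
        (fun t => Efun dd c t - Pfun (N+1) (bfun dd c (N+1)) t)
        (Efun dd (Dop c) t - Pfun (N+1) (Sop (bfun dd c (N+1))) t) (Set.Icc 0 u) t := by
      intro t _
      exact ((hasDerivAt_Efun dd c (hc _ (by omega)) t).sub
        (hasDerivAt_Pfun (N+1) (bfun dd c (N+1))
          (bfun_vanish dd c (N+1) (N+2) (by omega)) t)).hasDerivWithinAt
    have hbd : ∀ t ∈ Set.Ico (0:ℝ) u,
        ‖Efun dd (Dop c) t - Pfun (N+1) (Sop (bfun dd c (N+1))) t‖ ≤ K * u^(N+1) := by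
      intro t ht
      rw [hPrw t]
      have h1 : ‖Efun dd (Dop c) t - Pfun N (bfun dd (Dop c) N) t‖ ≤ K * t^(N+1) := by
        refine ih (Dop c) (fun k hk => Dop_iter_vanish dd 1 c hc k hk) ?_ t
          ⟨ht.1, le_trans (le_of_lt ht.2) hu.2⟩
        intro s hs
        rw [← Function.iterate_succ_apply]
        exact hK s hs
      refine h1.trans (mul_le_mul_of_nonneg_left ?_ hK0)
      exact pow_le_pow_left₀ ht.1 (le_of_lt ht.2) (N+1)
    have := norm_image_sub_le_of_norm_deriv_le_segment' hd hbd u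
      (Set.right_mem_Icc.mpr hu.1)
    rw [hg0, sub_zero, sub_zero] at this
    calc ‖Efun dd c u - Pfun (N+1) (bfun dd c (N+1)) u‖ ≤ K * u^(N+1) * u := this
    _ = K * u^(N+2) := by ring

lemma Sop_iter_bfun (dd : ℕ) (j : ℕ) : ∀ (c : ℕ → ℂ) (m : ℕ), j ≤ m →
    Sop^[j] (bfun dd c m) = bfun dd (Dop^[j] c) (m - j) := by
  induction j with
  | zero => intro c m _; simp
  | succ j ih =>
    intro c m hj
    obtain ⟨m', rfl⟩ : ∃ m', m = m' + 1 := ⟨m - 1, by omega⟩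
    have hm : m' + 1 - (j + 1) = m' - j := by omega
    rw [hm, Function.iterate_succ_apply, Sop_bfun, ih (Dop c) m' (by omega),
      Function.iterate_succ_apply]

lemma key_estimate (dd m j : ℕ) (c₀ : ℕ → ℂ) (hc : ∀ k, dd < k → c₀ k = 0)
    (hj : j ≤ m) (hdm : dd + j ≤ m) (l : ℝ) (hl0 : 0 ≤ l) (hl1 : l ≤ 1) :
    ∃ C : ℝ, 0 < C ∧ ∀ u : ℝ, 0 < u →
      ‖Efun dd (Dop^[j] c₀) u - Pfun m (Sop^[j] (bfun dd c₀ m)) u‖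
        ≤ C * u ^ ((m:ℝ) - (j:ℝ) + l) := by
  set K1 : ℝ := ∑ k ∈ range (dd+1), ‖(Dop^[j] c₀) k‖ with hK1
  set K2 : ℝ := ∑ k ∈ range (m+1), ‖(Sop^[j] (bfun dd c₀ m)) k‖ with hK2
  set K3 : ℝ := ∑ k ∈ range (dd+1), ‖(Dop^[m+1] c₀) k‖ with hK3
  have hK1n : 0 ≤ K1 := Finset.sum_nonneg fun _ _ => norm_nonneg _
  have hK2n : 0 ≤ K2 := Finset.sum_nonneg fun _ _ => norm_nonneg _
  have hK3n : 0 ≤ K3 := Finset.sum_nonneg fun _ _ => norm_nonneg _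
  refine ⟨K1 + K2 + K3 + 1, by positivity, ?_⟩
  intro u hu
  have hrw : Pfun m (Sop^[j] (bfun dd c₀ m)) u
      = Pfun (m - j) (bfun dd (Dop^[j] c₀) (m - j)) u := by
    rw [Sop_iter_bfun dd j c₀ m hj]
    exact Pfun_ext_of_vanish (m - j) m (by omega) _ (bfun_vanish dd (Dop^[j] c₀) (m-j)) u
  have hexp : 0 ≤ (m:ℝ) - (j:ℝ) + l := by
    have : (j:ℝ) ≤ (m:ℝ) := by exact_mod_cast hj
    linarith
  by_cases hu1 : u ≤ 1
  -- small u : Taylor remainder bound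
  · have hKbd : ∀ t ∈ Set.Icc (0:ℝ) 1, ‖Efun dd (Dop^[(m-j)+1] (Dop^[j] c₀)) t‖ ≤ K3 := by
      intro t ht
      have : Dop^[(m-j)+1] (Dop^[j] c₀) = Dop^[m+1] c₀ := by
        rw [← Function.iterate_add_apply]
        congr 1
        omega
      rw [this]
      have := norm_Efun_le dd dd (Dop^[m+1] c₀)
        (fun k hk => Dop_iter_vanish dd (m+1) c₀ hc k hk) t ht.1
      rwa [max_eq_left ht.2, one_pow, mul_one] at this
    have h1 := remainder_bound dd K3 (m - j) (Dop^[j] c₀)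
      (fun k hk => Dop_iter_vanish dd j c₀ hc k hk) hKbd u ⟨le_of_lt hu, hu1⟩
    rw [hrw]
    refine h1.trans ?_
    have hpow : u ^ ((m-j)+1) = u ^ (((m:ℝ) - (j:ℝ)) + 1) := by
      rw [← Real.rpow_natCast u ((m-j)+1)]
      congr 1
      push_cast [Nat.cast_sub hj]
      ring
    rw [hpow]
    have hmono : u ^ (((m:ℝ) - (j:ℝ)) + 1) ≤ u ^ ((m:ℝ) - (j:ℝ) + l) :=
      Real.rpow_le_rpow_of_exponent_ge hu hu1 (by linarith)
    have hK3le : K3 ≤ K1 + K2 + K3 + 1 := by linarith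
    calc K3 * u ^ (((m:ℝ) - (j:ℝ)) + 1) ≤ K3 * u ^ ((m:ℝ) - (j:ℝ) + l) :=
          mul_le_mul_of_nonneg_left hmono hK3n
    _ ≤ (K1 + K2 + K3 + 1) * u ^ ((m:ℝ) - (j:ℝ) + l) :=
          mul_le_mul_of_nonneg_right hK3le (Real.rpow_nonneg (le_of_lt hu) _)
  -- large u
  · push_neg at hu1
    have hmax : max 1 u = u := max_eq_right (le_of_lt hu1)
    have hE : ‖Efun dd (Dop^[j] c₀) u‖ ≤ K1 * u ^ (dd:ℝ) := by
      have := norm_Efun_le dd dd (Dop^[j] c₀)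
        (fun k hk => Dop_iter_vanish dd j c₀ hc k hk) u (le_of_lt hu)
      rwa [hmax, ← Real.rpow_natCast u dd] at this
    have hP : ‖Pfun m (Sop^[j] (bfun dd c₀ m)) u‖ ≤ K2 * u ^ (((m:ℝ) - (j:ℝ))) := by
      have hvan : ∀ k, (m - j) < k → (Sop^[j] (bfun dd c₀ m)) k = 0 := by
        rw [Sop_iter_bfun dd j c₀ m hj]
        exact bfun_vanish dd (Dop^[j] c₀) (m-j)
      have := norm_Pfun_le m (m-j) (Sop^[j] (bfun dd c₀ m)) hvan u (le_of_lt hu)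
      rwa [hmax, ← Real.rpow_natCast u (m-j), Nat.cast_sub hj] at this
    have h1u : (1:ℝ) ≤ u := le_of_lt hu1
    have hEd : u ^ (dd:ℝ) ≤ u ^ ((m:ℝ) - (j:ℝ) + l) := by
      refine Real.rpow_le_rpow_of_exponent_le h1u ?_
      have h1 : (dd:ℝ) + (j:ℝ) ≤ (m:ℝ) := by exact_mod_cast hdm
      linarith
    have hPd : u ^ ((m:ℝ) - (j:ℝ)) ≤ u ^ ((m:ℝ) - (j:ℝ) + l) :=
      Real.rpow_le_rpow_of_exponent_le h1u (by linarith)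
    calc ‖Efun dd (Dop^[j] c₀) u - Pfun m (Sop^[j] (bfun dd c₀ m)) u‖
        ≤ ‖Efun dd (Dop^[j] c₀) u‖ + ‖Pfun m (Sop^[j] (bfun dd c₀ m)) u‖ := norm_sub_le _ _
    _ ≤ K1 * u ^ ((m:ℝ) - (j:ℝ) + l) + K2 * u ^ ((m:ℝ) - (j:ℝ) + l) := by
        refine add_le_add (hE.trans ?_) (hP.trans ?_)
        · exact mul_le_mul_of_nonneg_left hEd hK1n
        · exact mul_le_mul_of_nonneg_left hPd hK2n
    _ ≤ (K1 + K2 + K3 + 1) * u ^ ((m:ℝ) - (j:ℝ) + l) := by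
        have : (0:ℝ) ≤ u ^ ((m:ℝ) - (j:ℝ) + l) := Real.rpow_nonneg (le_of_lt hu) _
        nlinarith

noncomputable def ccoef (n : ℕ) : ℕ → ℂ := fun k =>
  if k ≤ (n-3)/2 then
    (resC n : ℂ) * ((Nat.factorial (n - 3 - k) : ℂ) /
      ((Nat.factorial k : ℂ) * (Nat.factorial ((n - 3) / 2 - k) : ℂ))) *
      ((-2) * Complex.I)^k
  else 0

lemma ccoef_vanish (n : ℕ) : ∀ k, (n-3)/2 < k → ccoef n k = 0 := by
  intro k hk; simp [ccoef, Nat.not_le.mpr hk]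

lemma gker_eq (n : ℕ) (r t : ℝ) :
    gker n t r = ((r:ℂ)^(n-2))⁻¹ * Efun ((n-3)/2) (ccoef n) (r * t) := by
  rw [gker, Efun, Pfun]
  have hsum : ∑ k ∈ Finset.range ((n-3)/2 + 1), ccoef n k * ((r * t : ℝ) : ℂ)^k
      = (resC n : ℂ) * ∑ l ∈ Finset.range ((n - 3) / 2 + 1),
        ((Nat.factorial (n - 3 - l) : ℂ) /
          ((Nat.factorial l : ℂ) * (Nat.factorial ((n - 3) / 2 - l) : ℂ))) *
        ((-2) * Complex.I * (r : ℂ) * (t : ℂ)) ^ l := by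
    rw [Finset.mul_sum]
    refine Finset.sum_congr rfl fun k hk => ?_
    rw [ccoef, if_pos (by simpa [Nat.lt_succ_iff] using Finset.mem_range.mp hk)]
    push_cast
    ring
  rw [hsum]
  have harg : Complex.I * ((r * t : ℝ) : ℂ) = Complex.I * (t : ℂ) * (r : ℂ) := by
    push_cast; ring
  rw [harg]
  ring

lemma itd_cmul (a : ℂ) (f : ℝ → ℂ) (hf : ContDiff ℝ (⊤ : ℕ∞) f) (j : ℕ) (t : ℝ) :
    iteratedDeriv j (fun x => a * f x) t = a * iteratedDeriv j f t := by
  have h := iteratedDerivWithin_const_smul (𝕜 := ℝ) (F := ℂ) (R := ℂ) (n := j)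
    (s := Set.univ) (x := t) (Set.mem_univ t) uniqueDiffOn_univ a ((hf.of_le (by exact_mod_cast le_top)).contDiffWithinAt)
  simp only [iteratedDerivWithin_univ] at h
  simpa [smul_eq_mul] using h

lemma itd_scale (a : ℂ) (f : ℝ → ℂ) (hf : ContDiff ℝ (⊤ : ℕ∞) f) (r : ℝ) (j : ℕ) (t : ℝ) :
    iteratedDeriv j (fun x : ℝ => a * f (r * x)) t
      = a * (((r:ℝ)^j : ℝ) • iteratedDeriv j f (r * t)) := by
  have hcomp : ContDiff ℝ (⊤ : ℕ∞) (fun x : ℝ => f (r * x)) :=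
    hf.comp (contDiff_const.mul contDiff_id)
  rw [itd_cmul a _ hcomp j t]
  congr 1
  exact congrFun (iteratedDeriv_comp_const_smul (f := f) (n := j) (hf.of_le (by exact_mod_cast le_top)) r) t

lemma itd_gker (n : ℕ) (r : ℝ) (i : ℕ) (t : ℝ) :
    iteratedDeriv i (fun x : ℝ => gker n x r) t
      = ((r:ℂ)^(n-2))⁻¹ * (((r:ℝ)^i : ℝ) • Efun ((n-3)/2) (Dop^[i] (ccoef n)) (r * t)) := by
  have hfun : (fun x : ℝ => gker n x r)
      = fun x : ℝ => ((r:ℂ)^(n-2))⁻¹ * Efun ((n-3)/2) (ccoef n) (r * x) := by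
    funext x; exact gker_eq n r x
  rw [hfun, itd_scale _ _ (contDiff_Efun _ _) r i t,
    iteratedDeriv_E i _ _ (ccoef_vanish n)]

lemma gTaylor_eq (n m : ℕ) (r t : ℝ) :
    gTaylor n m t r = ((r:ℂ)^(n-2))⁻¹ *
      Pfun m (bfun ((n-3)/2) (ccoef n) m) (r * t) := by
  rw [gTaylor, Pfun, Finset.mul_sum]
  refine Finset.sum_congr rfl fun i hi => ?_
  rw [itd_gker n r i 0, bfun, if_pos (by simpa [Nat.lt_succ_iff] using Finset.mem_range.mp hi)]
  rw [mul_zero, Complex.real_smul]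
  push_cast
  ring

lemma itd_remainder (n m j : ℕ) (r lam : ℝ) :
    iteratedDeriv j (fun t : ℝ => gker n t r - gTaylor n m t r) lam
      = ((r:ℂ)^(n-2))⁻¹ * (((r:ℝ)^j : ℝ) •
        (Efun ((n-3)/2) (Dop^[j] (ccoef n)) (r * lam)
          - Pfun m (Sop^[j] (bfun ((n-3)/2) (ccoef n) m)) (r * lam))) := by
  have hfun : (fun t : ℝ => gker n t r - gTaylor n m t r)
      = fun t : ℝ => ((r:ℂ)^(n-2))⁻¹ *
        ((fun u : ℝ => Efun ((n-3)/2) (ccoef n) u - Pfun m (bfun ((n-3)/2) (ccoef n) m) u) (r * t)) := by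
    funext t
    rw [gker_eq n r t, gTaylor_eq n m r t]
    ring
  rw [hfun, itd_scale _ _ ((contDiff_Efun _ _).sub (contDiff_Pfun _ _)) r j lam,
    iteratedDeriv_EP j _ m _ _ (ccoef_vanish n) (bfun_vanish _ _ m)]

lemma transfer (n m j : ℕ) (hn : 5 ≤ n) (l : ℝ) (C : ℝ)
    (hEST : ∀ u : ℝ, 0 < u → ‖Efun ((n-3)/2) (Dop^[j] (ccoef n)) u
      - Pfun m (Sop^[j] (bfun ((n-3)/2) (ccoef n) m)) u‖ ≤ C * u ^ ((m:ℝ) - (j:ℝ) + l))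
    (lam r : ℝ) (hlam : 0 < lam) (hr : 0 < r) :
    ‖iteratedDeriv j (fun t : ℝ => gker n t r - gTaylor n m t r) lam‖
      ≤ C * r ^ ((m:ℝ) - ((n:ℝ) - 2) + l) * lam ^ ((m:ℝ) - (j:ℝ) + l) := by
  rw [itd_remainder]
  set Z : ℂ := Efun ((n-3)/2) (Dop^[j] (ccoef n)) (r * lam)
      - Pfun m (Sop^[j] (bfun ((n-3)/2) (ccoef n) m)) (r * lam) with hZ
  have h1 : ‖Z‖ ≤ C * (r * lam) ^ ((m:ℝ) - (j:ℝ) + l) := hEST (r*lam) (mul_pos hr hlam)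
  have hnorm : ‖((r:ℂ)^(n-2))⁻¹ * (((r:ℝ)^j : ℝ) • Z)‖
      = (r ^ (n-2))⁻¹ * (r ^ j * ‖Z‖) := by
    rw [norm_mul, norm_smul, norm_inv, norm_pow, Complex.norm_real, Real.norm_eq_abs,
      Real.norm_eq_abs, _root_.abs_of_pos hr, _root_.abs_of_pos (pow_pos hr j)]
  rw [hnorm]
  have hr' : (0:ℝ) ≤ r := hr.le
  have e2 : (r:ℝ)^(n-2) = r ^ (((n:ℝ) - 2)) := by
    rw [← Real.rpow_natCast r (n-2), Nat.cast_sub (by omega : 2 ≤ n)]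
    norm_num
  have e3 : (r:ℝ)^j = r ^ (j:ℝ) := (Real.rpow_natCast r j).symm
  have hstep : (r ^ (n-2):ℝ)⁻¹ * (r ^ j * ‖Z‖)
      ≤ (r ^ (n-2):ℝ)⁻¹ * (r ^ j * (C * (r * lam) ^ ((m:ℝ) - (j:ℝ) + l))) := by
    refine mul_le_mul_of_nonneg_left ?_ (by positivity)
    exact mul_le_mul_of_nonneg_left h1 (by positivity)
  refine hstep.trans (le_of_eq ?_)
  rw [e2, e3, Real.mul_rpow hr' hlam.le, ← Real.rpow_neg hr']
  rw [show (r ^ (-((n:ℝ) - 2)) * (r ^ (j:ℝ) * (C * (r ^ ((m:ℝ) - (j:ℝ) + l)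
      * lam ^ ((m:ℝ) - (j:ℝ) + l)))))
    = C * (r ^ (-((n:ℝ) - 2)) * r ^ (j:ℝ) * r ^ ((m:ℝ) - (j:ℝ) + l))
      * lam ^ ((m:ℝ) - (j:ℝ) + l) from by ring]
  rw [← Real.rpow_add hr, ← Real.rpow_add hr]
  ring_nf

lemma case_bound (n : ℕ) (hn : 5 ≤ n) (l : ℝ) (hl0 : 0 ≤ l) (hl1 : l ≤ 1)
    (m Jmax : ℕ) (hjm : Jmax ≤ m) (hdm : (n-3)/2 + Jmax ≤ m) :
    ∃ C : ℝ, 0 < C ∧ ∀ lam r : ℝ, 0 < lam → 0 < r → ∀ j, j ≤ Jmax →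
      ‖iteratedDeriv j (fun t : ℝ => gker n t r - gTaylor n m t r) lam‖
        ≤ C * r ^ ((m:ℝ) - ((n:ℝ) - 2) + l) * lam ^ ((m:ℝ) - (j:ℝ) + l) := by
  have H : ∀ j : ℕ, ∃ C : ℝ, 0 < C ∧ (j ≤ Jmax → ∀ u : ℝ, 0 < u →
      ‖Efun ((n-3)/2) (Dop^[j] (ccoef n)) u
        - Pfun m (Sop^[j] (bfun ((n-3)/2) (ccoef n) m)) u‖
          ≤ C * u ^ ((m:ℝ) - (j:ℝ) + l)) := by
    intro j
    by_cases hj : j ≤ Jmax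
    · obtain ⟨C, hC, hb⟩ := key_estimate ((n-3)/2) m j (ccoef n) (ccoef_vanish n)
        (by omega) (by omega) l hl0 hl1
      exact ⟨C, hC, fun _ => hb⟩
    · exact ⟨1, one_pos, fun h => absurd h hj⟩
  choose Cf hCf using H
  refine ⟨1 + ∑ j ∈ Finset.range (Jmax+1), Cf j, by
    have : 0 ≤ ∑ j ∈ Finset.range (Jmax+1), Cf j :=
      Finset.sum_nonneg fun j _ => (hCf j).1.le
    linarith, ?_⟩
  intro lam r hlam hr j hj
  have hCle : Cf j ≤ 1 + ∑ j ∈ Finset.range (Jmax+1), Cf j := by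
    have h1 : Cf j ≤ ∑ j ∈ Finset.range (Jmax+1), Cf j :=
      Finset.single_le_sum (fun i _ => (hCf i).1.le)
        (Finset.mem_range.mpr (by omega))
    linarith
  have := transfer n m j hn l (Cf j) ((hCf j).2 hj) lam r hlam hr
  refine this.trans ?_
  have hrp : (0:ℝ) ≤ r ^ ((m:ℝ) - ((n:ℝ) - 2) + l) := Real.rpow_nonneg hr.le _
  have hlp : (0:ℝ) ≤ lam ^ ((m:ℝ) - (j:ℝ) + l) := Real.rpow_nonneg hlam.le _
  have := mul_le_mul_of_nonneg_right (mul_le_mul_of_nonneg_right hCle hrp) hlp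
  linarith

/-- Taylor remainder bounds for the free resolvent kernel, Lemma 2.1 of the paper:
for `0 ≤ ℓ ≤ 1`, the errors `E_0, E_1, E_2, E_3` obtained by subtracting the Taylor
polynomials of degree `n−2, n−1, n, n+2` satisfy
`|∂_λ^j E_i(λ,r)| ≲ r^{ℓ+i'} λ^{n-2+i'+ℓ-j}` for the stated ranges of `j`. -/
theorem resolvent_expansion_remainders (n : ℕ) (hn : 5 ≤ n) (hodd : Odd n)
    (l : ℝ) (hl0 : 0 ≤ l) (hl1 : l ≤ 1) :
    ∃ C : ℝ, 0 < C ∧ ∀ lam : ℝ, 0 < lam → lam ≤ 1 → ∀ r : ℝ, 0 < r →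
      (∀ j : ℕ, j ≤ (n - 1) / 2 →
        ‖iteratedDeriv j (fun t : ℝ => gker n t r - gTaylor n (n - 2) t r) lam‖ ≤
          C * r ^ l * lam ^ ((n : ℝ) - 2 + l - (j : ℝ))) ∧
      (∀ j : ℕ, j ≤ (n + 1) / 2 →
        ‖iteratedDeriv j (fun t : ℝ => gker n t r - gTaylor n (n - 1) t r) lam‖ ≤
          C * r ^ (1 + l) * lam ^ ((n : ℝ) - 1 + l - (j : ℝ))) ∧
      (∀ j : ℕ, j ≤ (n + 3) / 2 →
        ‖iteratedDeriv j (fun t : ℝ => gker n t r - gTaylor n n t r) lam‖ ≤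
          C * r ^ (2 + l) * lam ^ ((n : ℝ) + l - (j : ℝ))) ∧
      (∀ j : ℕ, j ≤ (n + 7) / 2 →
        ‖iteratedDeriv j (fun t : ℝ => gker n t r - gTaylor n (n + 2) t r) lam‖ ≤
          C * r ^ (4 + l) * lam ^ ((n : ℝ) + 2 + l - (j : ℝ))) := by
  obtain ⟨C1, hC1, h1⟩ := case_bound n hn l hl0 hl1 (n-2) ((n-1)/2) (by omega) (by omega)
  obtain ⟨C2, hC2, h2⟩ := case_bound n hn l hl0 hl1 (n-1) ((n+1)/2) (by omega) (by omega)
  obtain ⟨C3, hC3, h3⟩ := case_bound n hn l hl0 hl1 n ((n+3)/2) (by omega) (by omega)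
  obtain ⟨C4, hC4, h4⟩ := case_bound n hn l hl0 hl1 (n+2) ((n+7)/2) (by omega) (by omega)
  refine ⟨C1+C2+C3+C4, by linarith, ?_⟩
  intro lam hlam _hlam1 r hr
  refine ⟨?_, ?_, ?_, ?_⟩
  · intro j hj
    have hb := h1 lam r hlam hr j hj
    have hcast : (((n-2:ℕ)):ℝ) = (n:ℝ) - 2 := by
      rw [Nat.cast_sub (by omega)]; norm_num
    rw [hcast, show (n:ℝ) - 2 - ((n:ℝ)-2) + l = l from by ring,
        show (n:ℝ) - 2 - (j:ℝ) + l = (n:ℝ) - 2 + l - (j:ℝ) from by ring] at hb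
    refine hb.trans ?_
    gcongr
    linarith
  · intro j hj
    have hb := h2 lam r hlam hr j hj
    have hcast : (((n-1:ℕ)):ℝ) = (n:ℝ) - 1 := by
      rw [Nat.cast_sub (by omega)]; norm_num
    rw [hcast, show (n:ℝ) - 1 - ((n:ℝ)-2) + l = 1 + l from by ring,
        show (n:ℝ) - 1 - (j:ℝ) + l = (n:ℝ) - 1 + l - (j:ℝ) from by ring] at hb
    refine hb.trans ?_
    gcongr
    linarith
  · intro j hj
    have hb := h3 lam r hlam hr j hj
    rw [show (n:ℝ) - ((n:ℝ)-2) + l = 2 + l from by ring,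
        show (n:ℝ) - (j:ℝ) + l = (n:ℝ) + l - (j:ℝ) from by ring] at hb
    refine hb.trans ?_
    gcongr
    linarith
  · intro j hj
    have hb := h4 lam r hlam hr j hj
    have hcast : (((n+2:ℕ)):ℝ) = (n:ℝ) + 2 := by push_cast; ring
    rw [hcast, show (n:ℝ) + 2 - ((n:ℝ)-2) + l = 4 + l from by ring,
        show (n:ℝ) + 2 - (j:ℝ) + l = (n:ℝ) + 2 + l - (j:ℝ) from by ring] at hb
    refine hb.trans ?_
    gcongr
    linarith
end

section
/- Let n ≥ 1, let k be a real number with k > −n/2, and let β be a real number with β > n/2 and β > n/2 + k. Then the kernel ⟨x⟩^{−β} |x−y|^{k} ⟨y⟩^{−β} is Hilbert–Schmidt on ℝⁿ × ℝⁿ; that is, ∬_{ℝ^{2n}} ⟨x⟩^{−2β} |x−y|^{2k} ⟨y⟩^{−2β} dx dy < ∞. -/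
open MeasureTheory Real Set Metric Module

lemma aux_rpow_int (n : ℕ) (s : ℝ) (hs : -(n : ℝ) < s) (hs0 : s < 0) :
    IntegrableOn (fun z : EuclideanSpace ℝ (Fin n) => ‖z‖ ^ s)
      (Metric.closedBall 0 1) := by
  set E := EuclideanSpace ℝ (Fin n)
  have hfr : (finrank ℝ E : ℝ) = n := by simp [E, finrank_euclideanSpace_fin]
  constructor
  · exact (Measurable.aestronglyMeasurable (by fun_prop)).restrict
  · rw [hasFiniteIntegral_iff_ofReal (ae_of_all _ fun x => Real.rpow_nonneg (norm_nonneg x) s)]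
    rw [lintegral_eq_lintegral_meas_le _ (ae_of_all _ fun x => Real.rpow_nonneg (norm_nonneg x) s)
      (by fun_prop)]
    set μ := (volume : Measure E).restrict (Metric.closedBall 0 1)
    have hV : volume (Metric.closedBall (0 : E) 1) < ⊤ := measure_closedBall_lt_top
    have hVb : volume (Metric.ball (0 : E) 1) < ⊤ := measure_ball_lt_top
    have hexp : (n : ℝ) * s⁻¹ < -1 := by
      rw [← div_eq_mul_inv, div_lt_iff_of_neg hs0]
      linarith
    calc ∫⁻ t in Ioi (0:ℝ), μ {a : E | t ≤ ‖a‖ ^ s}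
        ≤ ∫⁻ t in Ioc (0:ℝ) 1 ∪ Ioi 1, μ {a : E | t ≤ ‖a‖ ^ s} :=
          lintegral_mono_set Ioi_subset_Ioc_union_Ioi
      _ ≤ (∫⁻ t in Ioc (0:ℝ) 1, μ {a : E | t ≤ ‖a‖ ^ s})
            + ∫⁻ t in Ioi (1:ℝ), μ {a : E | t ≤ ‖a‖ ^ s} := lintegral_union_le _ _ _
      _ < ⊤ := by
          refine ENNReal.add_lt_top.2 ⟨?_, ?_⟩
          · calc (∫⁻ t in Ioc (0:ℝ) 1, μ {a : E | t ≤ ‖a‖ ^ s})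
                ≤ ∫⁻ _ in Ioc (0:ℝ) 1, volume (Metric.closedBall (0 : E) 1) := by
                  refine setLIntegral_mono measurable_const fun t _ => ?_
                  calc μ {a : E | t ≤ ‖a‖ ^ s} ≤ μ univ := measure_mono (subset_univ _)
                    _ = volume (Metric.closedBall (0 : E) 1) := Measure.restrict_apply_univ _
              _ = volume (Metric.closedBall (0 : E) 1) * volume (Ioc (0:ℝ) 1) := by
                  rw [setLIntegral_const]
              _ < ⊤ := by
                  apply ENNReal.mul_lt_top hV
                  simp [Real.volume_Ioc]
          · have hbound : ∀ t ∈ Ioi (1:ℝ), μ {a : E | t ≤ ‖a‖ ^ s}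
                ≤ ENNReal.ofReal (t ^ ((n : ℝ) * s⁻¹)) * volume (Metric.ball (0 : E) 1) := by
              intro t ht
              have ht0 : (0:ℝ) < t := lt_trans one_pos ht
              have hsub : {a : E | t ≤ ‖a‖ ^ s} ⊆ Metric.closedBall 0 (t ^ s⁻¹) := by
                intro a ha
                simp only [mem_setOf_eq] at ha
                rcases eq_or_ne a 0 with rfl | ha0
                · exfalso
                  rw [norm_zero, Real.zero_rpow hs0.ne] at ha
                  linarith
                · have hna : 0 < ‖a‖ := norm_pos_iff.2 ha0
                  rw [Metric.mem_closedBall, dist_zero_right]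
                  exact (Real.le_rpow_inv_iff_of_neg hna ht0 hs0).2 ha
              calc μ {a : E | t ≤ ‖a‖ ^ s}
                  ≤ volume (Metric.closedBall (0:E) (t ^ s⁻¹)) :=
                    le_trans (Measure.le_iff'.1 Measure.restrict_le_self _)
                      (measure_mono hsub)
                _ = ENNReal.ofReal ((t ^ s⁻¹) ^ finrank ℝ E) * volume (Metric.ball (0:E) 1) :=
                    Measure.addHaar_closedBall _ _ (Real.rpow_nonneg ht0.le _)
                _ = ENNReal.ofReal (t ^ ((n : ℝ) * s⁻¹)) * volume (Metric.ball (0:E) 1) := by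
                    congr 1
                    rw [← Real.rpow_natCast (t ^ s⁻¹) (finrank ℝ E), ← Real.rpow_mul ht0.le]
                    rw [hfr]
                    ring_nf
            calc (∫⁻ t in Ioi (1:ℝ), μ {a : E | t ≤ ‖a‖ ^ s})
                ≤ ∫⁻ t in Ioi (1:ℝ),
                    ENNReal.ofReal (t ^ ((n : ℝ) * s⁻¹)) * volume (Metric.ball (0 : E) 1) := by
                  refine setLIntegral_mono (by fun_prop) hbound
              _ = (∫⁻ t in Ioi (1:ℝ), ENNReal.ofReal (t ^ ((n : ℝ) * s⁻¹)))
                    * volume (Metric.ball (0 : E) 1) := by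
                  rw [lintegral_mul_const' _ _ hVb.ne]
              _ < ⊤ := by
                  apply ENNReal.mul_lt_top _ hVb
                  have hInt := (integrableOn_Ioi_rpow_of_lt hexp one_pos).hasFiniteIntegral
                  rw [HasFiniteIntegral] at hInt
                  exact lt_of_le_of_lt
                    (lintegral_mono fun t => Real.ofReal_le_enorm _) hInt

/-- The kernel `⟨x⟩^{−β} |x−y|^{k} ⟨y⟩^{−β}` is Hilbert–Schmidt on `ℝⁿ × ℝⁿ`
provided `k > −n/2`, `β > n/2` and `β > n/2 + k`; i.e. its square is integrable. -/
theorem hilbert_schmidt_kernel (n : ℕ) (hn : 1 ≤ n) (k β : ℝ)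
    (hk : -(n : ℝ) / 2 < k) (hβ1 : (n : ℝ) / 2 < β) (hβ2 : (n : ℝ) / 2 + k < β) :
    Integrable (fun p : EuclideanSpace ℝ (Fin n) × EuclideanSpace ℝ (Fin n) =>
      (1 + ‖p.1‖) ^ (-(2 * β)) * ‖p.1 - p.2‖ ^ (2 * k) * (1 + ‖p.2‖) ^ (-(2 * β))) := by
  set E := EuclideanSpace ℝ (Fin n)
  have hfr : (finrank ℝ E : ℝ) = n := by simp [E, finrank_euclideanSpace_fin]
  have hβ0 : 0 < β := lt_of_le_of_lt (by positivity) hβ1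
  have hFmeas : AEStronglyMeasurable (fun p : E × E =>
      (1 + ‖p.1‖) ^ (-(2 * β)) * ‖p.1 - p.2‖ ^ (2 * k) * (1 + ‖p.2‖) ^ (-(2 * β)))
      (volume : Measure (E × E)) :=
    Measurable.aestronglyMeasurable (by fun_prop)
  have hFnn : ∀ p : E × E, 0 ≤
      (1 + ‖p.1‖) ^ (-(2 * β)) * ‖p.1 - p.2‖ ^ (2 * k) * (1 + ‖p.2‖) ^ (-(2 * β)) := by
    intro p; positivity
  rcases le_or_gt 0 k with hk0 | hk0
  · -- case k ≥ 0
    set g : E → ℝ := fun x => (1 + ‖x‖) ^ (-(2 * β - 2 * k)) with hg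
    have hgint : Integrable g (volume : Measure E) := by
      apply integrable_one_add_norm
      rw [hfr]; linarith
    have hbint : Integrable (fun p : E × E => g p.1 * g p.2) (volume : Measure (E × E)) := by
      rw [Measure.volume_eq_prod]
      exact hgint.mul_prod hgint
    refine hbint.mono' hFmeas (ae_of_all _ fun p => ?_)
    obtain ⟨x, y⟩ := p
    simp only
    have hx1 : (0:ℝ) < 1 + ‖x‖ := by positivity
    have hy1 : (0:ℝ) < 1 + ‖y‖ := by positivity
    rw [Real.norm_of_nonneg (hFnn (x, y))]
    have hd : ‖x - y‖ ≤ (1 + ‖x‖) * (1 + ‖y‖) := by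
      have h1 := norm_sub_le x y
      nlinarith [norm_nonneg x, norm_nonneg y]
    have h2 : ‖x - y‖ ^ (2 * k) ≤ (1 + ‖x‖) ^ (2 * k) * (1 + ‖y‖) ^ (2 * k) := by
      rw [← Real.mul_rpow hx1.le hy1.le]
      exact Real.rpow_le_rpow (norm_nonneg _) hd (by linarith)
    calc (1 + ‖x‖) ^ (-(2 * β)) * ‖x - y‖ ^ (2 * k) * (1 + ‖y‖) ^ (-(2 * β))
        ≤ (1 + ‖x‖) ^ (-(2 * β)) * ((1 + ‖x‖) ^ (2 * k) * (1 + ‖y‖) ^ (2 * k))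
            * (1 + ‖y‖) ^ (-(2 * β)) := by
          have hA : (0:ℝ) ≤ (1 + ‖x‖) ^ (-(2 * β)) := by positivity
          have hB : (0:ℝ) ≤ (1 + ‖y‖) ^ (-(2 * β)) := by positivity
          exact mul_le_mul_of_nonneg_right (mul_le_mul_of_nonneg_left h2 hA) hB
      _ = g x * g y := by
          rw [hg]
          rw [show (1 + ‖x‖) ^ (-(2 * β)) * ((1 + ‖x‖) ^ (2 * k) * (1 + ‖y‖) ^ (2 * k))
              * (1 + ‖y‖) ^ (-(2 * β))
              = ((1 + ‖x‖) ^ (-(2 * β)) * (1 + ‖x‖) ^ (2 * k))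
                * ((1 + ‖y‖) ^ (-(2 * β)) * (1 + ‖y‖) ^ (2 * k)) from by ring]
          rw [← Real.rpow_add hx1, ← Real.rpow_add hy1]
          congr 1 <;> · congr 1; ring
  · -- case k < 0
    set K : E → ℝ := fun z => if ‖z‖ ≤ 1 then ‖z‖ ^ (2 * k) else 0 with hK
    have hKnn : ∀ z, 0 ≤ K z := by
      intro z; rw [hK]; dsimp only; split
      · positivity
      · exact le_refl 0
    have hKmeas : Measurable K := by
      apply Measurable.ite _ (by fun_prop) measurable_const
      exact measurableSet_le (by fun_prop) measurable_const
    have hKint : Integrable K (volume : Measure E) := by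
      have : K = (Metric.closedBall (0:E) 1).indicator (fun z => ‖z‖ ^ (2 * k)) := by
        funext z
        rw [hK, Set.indicator]
        simp [Metric.mem_closedBall, dist_zero_right]
      rw [this, integrable_indicator_iff measurableSet_closedBall]
      exact aux_rpow_int n (2 * k) (by linarith) (by linarith)
    set c : E → ℝ := fun x => 2 ^ (2 * β) * (1 + ‖x‖) ^ (-(4 * β)) with hc
    have hcint : Integrable c (volume : Measure E) := by
      apply Integrable.const_mul
      apply integrable_one_add_norm
      rw [hfr]; linarith
    set g : E → ℝ := fun x => (1 + ‖x‖) ^ (-(2 * β)) with hg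
    have hgint : Integrable g (volume : Measure E) := by
      apply integrable_one_add_norm
      rw [hfr]; linarith
    have h1int : Integrable (fun p : E × E => g p.1 * g p.2) (volume : Measure (E × E)) := by
      rw [Measure.volume_eq_prod]
      exact hgint.mul_prod hgint
    have h2int : Integrable (fun p : E × E => c p.1 * K (p.1 - p.2))
        (volume : Measure (E × E)) := by
      have hT : MeasurePreserving (fun p : E × E => (p.1, p.2 - p.1))
          (volume : Measure (E × E)) (volume : Measure (E × E)) := by
        rw [Measure.volume_eq_prod]
        exact measurePreserving_prod_sub _ _
      have hgm : AEStronglyMeasurable (fun q : E × E => c q.1 * K q.2)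
          (volume : Measure (E × E)) := by
        apply Measurable.aestronglyMeasurable
        have hcm : Measurable c := by rw [hc]; fun_prop
        exact (hcm.comp measurable_fst).mul (hKmeas.comp measurable_snd)
      have hcomp : Integrable ((fun q : E × E => c q.1 * K q.2)
          ∘ (fun p : E × E => (p.1, p.2 - p.1))) (volume : Measure (E × E)) := by
        rw [hT.integrable_comp hgm]
        rw [Measure.volume_eq_prod]
        exact hcint.mul_prod hKint
      have : ((fun q : E × E => c q.1 * K q.2) ∘ (fun p : E × E => (p.1, p.2 - p.1)))
          = fun p : E × E => c p.1 * K (p.1 - p.2) := by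
        funext p
        simp only [Function.comp_apply, hK]
        rw [norm_sub_rev p.2 p.1]
      rwa [this] at hcomp
    refine ((h1int.add h2int).mono' hFmeas (ae_of_all _ fun p => ?_))
    obtain ⟨x, y⟩ := p
    simp only
    have hx1 : (0:ℝ) < 1 + ‖x‖ := by positivity
    have hy1 : (0:ℝ) < 1 + ‖y‖ := by positivity
    rw [Real.norm_of_nonneg (hFnn (x, y))]
    simp only [Pi.add_apply]
    have hg1nn : 0 ≤ g x * g y := by rw [hg]; positivity
    have hh2nn : 0 ≤ c x * K (x - y) := by
      apply mul_nonneg _ (hKnn _)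
      rw [hc]; positivity
    rcases le_or_gt ‖x - y‖ 1 with hxy | hxy
    · -- near diagonal
      have hbb : (1 + ‖y‖) ^ (-(2 * β)) ≤ 2 ^ (2 * β) * (1 + ‖x‖) ^ (-(2 * β)) := by
        have hab : 1 + ‖x‖ ≤ 2 * (1 + ‖y‖) := by
          have := norm_sub_norm_le x y
          have := norm_nonneg y
          linarith
        have h1 : (1 + ‖x‖) ^ (2 * β) ≤ 2 ^ (2 * β) * (1 + ‖y‖) ^ (2 * β) := by
          rw [← Real.mul_rpow (by norm_num) hy1.le]
          exact Real.rpow_le_rpow hx1.le hab (by linarith)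
        have hA : (0:ℝ) < (1 + ‖x‖) ^ (2 * β) := by positivity
        have hB : (0:ℝ) < (1 + ‖y‖) ^ (2 * β) := by positivity
        rw [Real.rpow_neg hx1.le, Real.rpow_neg hy1.le]
        calc ((1 + ‖y‖) ^ (2 * β))⁻¹
            = (1 + ‖x‖) ^ (2 * β) * (((1 + ‖x‖) ^ (2 * β))⁻¹ * ((1 + ‖y‖) ^ (2 * β))⁻¹) := by
              field_simp
          _ ≤ (2 ^ (2 * β) * (1 + ‖y‖) ^ (2 * β))
              * (((1 + ‖x‖) ^ (2 * β))⁻¹ * ((1 + ‖y‖) ^ (2 * β))⁻¹) := by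
              apply mul_le_mul_of_nonneg_right h1 (by positivity)
          _ = 2 ^ (2 * β) * ((1 + ‖x‖) ^ (2 * β))⁻¹ := by
              field_simp
      have hKval : K (x - y) = ‖x - y‖ ^ (2 * k) := by
        simp only [hK]
        rw [if_pos hxy]
      have hF2 : (1 + ‖x‖) ^ (-(2 * β)) * ‖x - y‖ ^ (2 * k) * (1 + ‖y‖) ^ (-(2 * β))
          ≤ c x * K (x - y) := by
        rw [hc, hKval]
        calc (1 + ‖x‖) ^ (-(2 * β)) * ‖x - y‖ ^ (2 * k) * (1 + ‖y‖) ^ (-(2 * β))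
            ≤ (1 + ‖x‖) ^ (-(2 * β)) * ‖x - y‖ ^ (2 * k)
                * (2 ^ (2 * β) * (1 + ‖x‖) ^ (-(2 * β))) := by
              apply mul_le_mul_of_nonneg_left hbb (by positivity)
          _ = 2 ^ (2 * β) * ((1 + ‖x‖) ^ (-(2 * β)) * (1 + ‖x‖) ^ (-(2 * β)))
                * ‖x - y‖ ^ (2 * k) := by ring
          _ = 2 ^ (2 * β) * (1 + ‖x‖) ^ (-(4 * β)) * ‖x - y‖ ^ (2 * k) := by
              rw [← Real.rpow_add hx1]
              congr 2
              ring
      linarith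
    · -- far from diagonal
      have hd1 : ‖x - y‖ ^ (2 * k) ≤ 1 :=
        Real.rpow_le_one_of_one_le_of_nonpos hxy.le (by linarith)
      have : (1 + ‖x‖) ^ (-(2 * β)) * ‖x - y‖ ^ (2 * k) * (1 + ‖y‖) ^ (-(2 * β))
          ≤ g x * g y := by
        rw [hg]
        calc (1 + ‖x‖) ^ (-(2 * β)) * ‖x - y‖ ^ (2 * k) * (1 + ‖y‖) ^ (-(2 * β))
            ≤ (1 + ‖x‖) ^ (-(2 * β)) * 1 * (1 + ‖y‖) ^ (-(2 * β)) := by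
              have hA : (0:ℝ) ≤ (1 + ‖x‖) ^ (-(2 * β)) := by positivity
              have hB : (0:ℝ) ≤ (1 + ‖y‖) ^ (-(2 * β)) := by positivity
              exact mul_le_mul_of_nonneg_right (mul_le_mul_of_nonneg_left hd1 hA) hB
          _ = (1 + ‖x‖) ^ (-(2 * β)) * (1 + ‖y‖) ^ (-(2 * β)) := by ring
      linarith
end

section
/- Let n ≥ 5 be odd, let 0 ≤ ℓ ≤ 1, and let v : ℝⁿ → [0,∞) satisfy v(x) ≤ C₀⟨x⟩^{−β}. For fixed r > 0 let T_m(λ, r) denote the degree-m Taylor polynomial in λ at λ = 0 of λ ↦ g_n(λ, r). Then: (i) If β > n/2 + ℓ there is C such that for all integers 0 ≤ j ≤ (n−1)/2 and all 0 < λ ≤ 1, ( ∬_{ℝ^{2n}} | v(x) ∂_λ^j (g_n − T_{n−2})(λ, |x−y|) v(y) |² dx dy )^{1/2} ≤ C λ^{n−2+ℓ−j}. (ii) If β > n/2 + 2 + ℓ there is C such that for all integers 0 ≤ j ≤ (n+1)/2 and all 0 < λ ≤ 1, ( ∬_{ℝ^{2n}} | v(x) ∂_λ^j (g_n − T_n)(λ,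 |x−y|) v(y) |² dx dy )^{1/2} ≤ C λ^{n+ℓ−j}. (iii) If β > n/2 + 4 + ℓ there is C such that for all integers 0 ≤ j ≤ (n+1)/2 and all 0 < λ ≤ 1, ( ∬_{ℝ^{2n}} | v(x) ∂_λ^j (g_n − T_{n+2})(λ, |x−y|) v(y) |² dx dy )^{1/2} ≤ C λ^{n+2+ℓ−j}. -/
open MeasureTheory Complex Real Finset

noncomputable def expRem (N : ℕ) (z : ℂ) : ℂ :=
  Complex.exp z - ∑ k ∈ Finset.range N, z ^ k / (Nat.factorial k)

lemma expRem_zeroN (z : ℂ) : expRem 0 z = Complex.exp z := by simp [expRem]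

lemma expRem_succ (N : ℕ) (z : ℂ) :
    expRem (N + 1) z = expRem N z - z ^ N / (Nat.factorial N) := by
  simp [expRem, Finset.sum_range_succ]; ring

lemma expRem_at_zero (N : ℕ) (hN : 1 ≤ N) : expRem N 0 = 0 := by
  induction N with
  | zero => omega
  | succ k ih =>
    rcases Nat.eq_zero_or_pos k with hk | hk
    · subst hk; simp [expRem]
    · rw [expRem_succ, ih hk]
      simp [Nat.pos_iff_ne_zero.mp hk]

lemma contDiff_expRem (N : ℕ) : ContDiff ℂ ⊤ (expRem N) := by
  unfold expRem
  exact Complex.contDiff_exp.sub (ContDiff.sum fun i _ => (contDiff_id.pow i).div_const _)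

lemma hasDerivAt_expRem (N : ℕ) (z : ℂ) :
    HasDerivAt (expRem N) (expRem (N - 1) z) z := by
  cases N with
  | zero =>
    have he : expRem 0 = Complex.exp := funext fun w => by simp [expRem]
    rw [he]
    exact Complex.hasDerivAt_exp z
  | succ N =>
    have h1 : HasDerivAt (fun z : ℂ => ∑ k ∈ Finset.range (N + 1), z ^ k / (Nat.factorial k))
        (∑ k ∈ Finset.range N, z ^ k / (Nat.factorial k)) z := by
      have : HasDerivAt (fun z : ℂ => ∑ k ∈ Finset.range (N + 1), z ^ k / (Nat.factorial k))
          (∑ k ∈ Finset.range (N + 1), (k : ℂ) * z ^ (k - 1) / (Nat.factorial k)) z := by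
        apply HasDerivAt.fun_sum
        intro k _
        exact (hasDerivAt_pow k z).div_const _
      convert this using 1
      rw [Finset.sum_range_succ' (fun k => (k : ℂ) * z ^ (k - 1) / (Nat.factorial k))]
      simp only [Nat.cast_zero, zero_mul, Nat.factorial_zero, Nat.cast_one, zero_div, add_zero]
      apply Finset.sum_congr rfl
      intro k _
      have hfac : ((Nat.factorial (k + 1) : ℂ)) = (k + 1) * (Nat.factorial k) := by
        push_cast [Nat.factorial_succ]; ring
      have hk1 : ((k : ℂ) + 1) ≠ 0 := Nat.cast_add_one_ne_zero k
      have hfk : ((Nat.factorial k : ℂ)) ≠ 0 := by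
        exact_mod_cast Nat.cast_ne_zero.mpr (Nat.factorial_ne_zero k)
      rw [hfac]
      push_cast
      field_simp
    have h2 := (Complex.hasDerivAt_exp z).sub h1
    have he : expRem (N + 1) = Complex.exp - fun z : ℂ =>
        ∑ k ∈ Finset.range (N + 1), z ^ k / (Nat.factorial k) := funext fun w => rfl
    rw [he]
    exact h2.congr_deriv rfl

noncomputable def hh (r : ℝ) (q N : ℕ) (t : ℝ) : ℂ :=
  (t : ℂ) ^ q * expRem N (Complex.I * r * t)

lemma hasDerivAt_hh (r : ℝ) (q N : ℕ) (t : ℝ) :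
    HasDerivAt (hh r q N)
      ((q : ℂ) * hh r (q - 1) N t + (Complex.I * r) * hh r q (N - 1) t) t := by
  have h1 : HasDerivAt (fun t : ℝ => (t : ℂ) ^ q) ((q : ℂ) * (t : ℂ) ^ (q - 1)) t :=
    (hasDerivAt_pow q (t : ℂ)).comp_ofReal
  have h2c : HasDerivAt (fun z : ℂ => expRem N (Complex.I * r * z))
      ((Complex.I * r) * expRem (N - 1) (Complex.I * r * (t : ℂ))) (t : ℝ) := by
    have hlin : HasDerivAt (fun z : ℂ => Complex.I * r * z) (Complex.I * r) (t : ℂ) := by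
      simpa using (hasDerivAt_id (t : ℂ)).const_mul (Complex.I * r)
    have h := (hasDerivAt_expRem N (Complex.I * r * t)).comp (t : ℂ) hlin
    simp only [Function.comp_def] at h
    exact h.congr_deriv (by ring)
  have h2 : HasDerivAt (fun t : ℝ => expRem N (Complex.I * r * t))
      ((Complex.I * r) * expRem (N - 1) (Complex.I * r * (t : ℂ))) t := h2c.comp_ofReal
  have := h1.mul h2
  unfold hh
  exact this.congr_deriv (by ring)

lemma contDiff_hh (r : ℝ) (q N : ℕ) : ContDiff ℝ (⊤ : ℕ∞) (hh r q N) := by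
  unfold hh
  apply ContDiff.mul
  · exact (Complex.ofRealCLM.contDiff).pow q
  · exact (((contDiff_expRem N).restrict_scalars ℝ).comp
      (contDiff_const.mul Complex.ofRealCLM.contDiff)).of_le le_top

lemma expRem_def (N : ℕ) (z : ℂ) :
    expRem N z = Complex.exp z - ∑ k ∈ Finset.range N, z ^ k / (Nat.factorial k) := rfl

lemma itD_const_mul (c : ℂ) (f : ℝ → ℂ) (hf : ContDiff ℝ (⊤ : ℕ∞) f) (j : ℕ) :
    iteratedDeriv j (fun t => c * f t) = fun t => c * iteratedDeriv j f t := by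
  induction j with
  | zero => simp [iteratedDeriv_zero]
  | succ j ih =>
    rw [iteratedDeriv_succ, ih, iteratedDeriv_succ]
    funext t
    exact deriv_const_mul c
      ((hf.differentiable_iteratedDeriv j (by exact_mod_cast ENat.coe_lt_top j)).differentiableAt)

lemma itD_sum {ι : Type*} (s : Finset ι) (f : ι → ℝ → ℂ)
    (hf : ∀ i ∈ s, ContDiff ℝ (⊤ : ℕ∞) (f i)) (j : ℕ) :
    iteratedDeriv j (fun t => ∑ i ∈ s, f i t) = fun t => ∑ i ∈ s, iteratedDeriv j (f i) t := by
  induction j with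
  | zero => simp [iteratedDeriv_zero]
  | succ j ih =>
    rw [iteratedDeriv_succ, ih]
    funext t
    rw [deriv_fun_sum fun i hi =>
      (((hf i hi).differentiable_iteratedDeriv j (by exact_mod_cast ENat.coe_lt_top j)).differentiableAt)]
    simp only [iteratedDeriv_succ]

lemma itD_add (f g : ℝ → ℂ) (hf : ContDiff ℝ (⊤ : ℕ∞) f) (hg : ContDiff ℝ (⊤ : ℕ∞) g) (j : ℕ) :
    iteratedDeriv j (fun t => f t + g t) = fun t => iteratedDeriv j f t + iteratedDeriv j g t := by
  induction j with
  | zero => simp [iteratedDeriv_zero]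
  | succ j ih =>
    rw [iteratedDeriv_succ, ih]
    funext t
    rw [deriv_fun_add ((hf.differentiable_iteratedDeriv j (by exact_mod_cast ENat.coe_lt_top j)).differentiableAt)
      ((hg.differentiable_iteratedDeriv j (by exact_mod_cast ENat.coe_lt_top j)).differentiableAt)]
    simp only [iteratedDeriv_succ]

lemma q_descFactorial (q s : ℕ) : (q : ℂ) * ((q - 1).descFactorial s : ℂ) = (q.descFactorial (s + 1) : ℂ) := by
  cases q with
  | zero => simp
  | succ q' => rw [Nat.succ_descFactorial_succ]; push_cast; ring

lemma iteratedDeriv_hh (r : ℝ) (q N j : ℕ) :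
    iteratedDeriv j (hh r q N) = fun t =>
      ∑ s ∈ Finset.range (j + 1), ((j.choose s : ℂ) * (q.descFactorial s : ℂ)) *
        (Complex.I * r) ^ (j - s) * hh r (q - s) (N - (j - s)) t := by
  induction j generalizing q N with
  | zero => funext t; simp
  | succ j ih =>
    rw [iteratedDeriv_succ']
    have hderiv : deriv (hh r q N) =
        fun t => (q : ℂ) * hh r (q - 1) N t + (Complex.I * r) * hh r q (N - 1) t :=
      funext fun t => (hasDerivAt_hh r q N t).deriv
    rw [hderiv]
    rw [itD_add _ _ (contDiff_const.mul (contDiff_hh r (q-1) N))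
      (contDiff_const.mul (contDiff_hh r q (N-1))) j]
    funext t
    rw [itD_const_mul _ _ (contDiff_hh r (q-1) N) j, itD_const_mul _ _ (contDiff_hh r q (N-1)) j,
      ih (q-1) N, ih q (N-1)]
    -- abbreviation for the generic term
    set T : ℕ → ℂ := fun s => ((q.descFactorial (s+1) : ℂ)) * (Complex.I * r) ^ (j - s) *
      hh r (q - (s+1)) (N - (j - s)) t with hT
    have hfirst : (q : ℂ) * ∑ s ∈ Finset.range (j + 1),
        ((j.choose s : ℂ) * ((q-1).descFactorial s : ℂ)) * (Complex.I * r) ^ (j - s) *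
          hh r (q - 1 - s) (N - (j - s)) t
        = ∑ s ∈ Finset.range (j + 1), (j.choose s : ℂ) * T s := by
      rw [Finset.mul_sum]
      apply Finset.sum_congr rfl
      intro s _
      have e1 : q - 1 - s = q - (s + 1) := by omega
      rw [hT, e1]
      have := q_descFactorial q s
      push_cast at this ⊢
      calc (q:ℂ) * ((j.choose s : ℂ) * ((q-1).descFactorial s : ℂ) * (Complex.I * r) ^ (j - s) *
          hh r (q - (s+1)) (N - (j - s)) t)
          = ((q:ℂ) * ((q-1).descFactorial s : ℂ)) * ((j.choose s : ℂ) * ((Complex.I * r) ^ (j - s) *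
            hh r (q - (s+1)) (N - (j - s)) t)) := by ring
        _ = _ := by rw [this]; ring
    have hsecond : (Complex.I * r) * ∑ s ∈ Finset.range (j + 1),
        ((j.choose s : ℂ) * (q.descFactorial s : ℂ)) * (Complex.I * r) ^ (j - s) *
          hh r (q - s) (N - 1 - (j - s)) t
        = (∑ s ∈ Finset.range j, (j.choose (s+1) : ℂ) * T s)
          + ((Complex.I * r) ^ (j + 1) * hh r q (N - (j + 1)) t) := by
      rw [Finset.mul_sum, Finset.sum_range_succ' (fun s => (Complex.I * r) *
        (((j.choose s : ℂ) * (q.descFactorial s : ℂ)) * (Complex.I * r) ^ (j - s) *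
          hh r (q - s) (N - 1 - (j - s)) t))]
      congr 1
      · apply Finset.sum_congr rfl
        intro s hs
        have hsj : s < j := Finset.mem_range.mp hs
        have e2 : j - (s + 1) = j - s - 1 := by omega
        have e3 : N - 1 - (j - (s+1)) = N - (j - s) := by omega
        have e4 : (Complex.I * r) * (Complex.I * r) ^ (j - (s+1)) = (Complex.I * r) ^ (j - s) := by
          rw [← pow_succ']
          congr 1
          omega
        rw [e3, hT]
        calc (Complex.I * r) * (((j.choose (s+1) : ℂ) * (q.descFactorial (s+1) : ℂ)) *
            (Complex.I * r) ^ (j - (s+1)) * hh r (q - (s+1)) (N - (j - s)) t)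
            = ((j.choose (s+1) : ℂ)) * ((q.descFactorial (s+1) : ℂ) *
              ((Complex.I * r) * (Complex.I * r) ^ (j - (s+1))) * hh r (q - (s+1)) (N - (j - s)) t) := by
              ring
          _ = _ := by rw [e4]
      · have e5 : N - 1 - j = N - (j + 1) := by omega
        simp only [e5, Nat.choose_zero_right, Nat.cast_one, Nat.descFactorial_zero, one_mul,
          Nat.sub_zero]
        rw [pow_succ']
        ring
    dsimp only
    rw [hfirst, hsecond]
    -- now split RHS
    rw [Finset.sum_range_succ' (fun s => (((j+1).choose s : ℂ) * (q.descFactorial s : ℂ)) *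
      (Complex.I * r) ^ (j + 1 - s) * hh r (q - s) (N - (j + 1 - s)) t)]
    have hlast : ((((j+1).choose 0 : ℕ) : ℂ) * ((q.descFactorial 0 : ℕ) : ℂ)) *
        (Complex.I * r) ^ (j + 1 - 0) * hh r (q - 0) (N - (j + 1 - 0)) t
        = (Complex.I * r) ^ (j + 1) * hh r q (N - (j + 1)) t := by
      simp
    have hmain : ∑ s ∈ Finset.range (j+1), ((((j+1).choose (s+1) : ℕ) : ℂ) * ((q.descFactorial (s+1) : ℕ) : ℂ)) *
        (Complex.I * r) ^ (j + 1 - (s+1)) * hh r (q - (s+1)) (N - (j + 1 - (s+1))) t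
        = (∑ s ∈ Finset.range (j+1), (j.choose s : ℂ) * T s)
          + ∑ s ∈ Finset.range j, (j.choose (s+1) : ℂ) * T s := by
      have hext : ∑ s ∈ Finset.range j, (j.choose (s+1) : ℂ) * T s
          = ∑ s ∈ Finset.range (j+1), (j.choose (s+1) : ℂ) * T s := by
        rw [Finset.sum_range_succ]
        simp [Nat.choose_succ_self]
      rw [hext, ← Finset.sum_add_distrib]
      apply Finset.sum_congr rfl
      intro s _
      have e6 : j + 1 - (s + 1) = j - s := by omega
      rw [e6, hT, Nat.choose_succ_succ]
      push_cast
      ring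
    rw [hlast, hmain]
    ring

lemma hasDerivAt_expRem_real (N : ℕ) (c : ℂ) (t : ℝ) :
    HasDerivAt (fun u : ℝ => expRem N (c * u)) (c * expRem (N - 1) (c * t)) t := by
  have hlin : HasDerivAt (fun z : ℂ => c * z) c (t : ℂ) := by
    simpa using (hasDerivAt_id (t : ℂ)).const_mul c
  have h := (hasDerivAt_expRem N (c * t)).comp (t : ℂ) hlin
  simp only [Function.comp_def] at h
  have h2 := h.comp_ofReal
  convert h2 using 1
  ring

lemma continuous_expRem_real (N : ℕ) (c : ℂ) :
    Continuous (fun t : ℝ => expRem N (c * t)) :=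
  (contDiff_expRem N).continuous.comp (continuous_const.mul Complex.continuous_ofReal)

lemma norm_expRem_le (N : ℕ) : ∀ x : ℝ, 0 ≤ x →
    ‖expRem N (Complex.I * x)‖ ≤ x ^ N / (Nat.factorial N) := by
  induction N with
  | zero =>
    intro x hx
    rw [expRem_zeroN]
    simp [Complex.norm_exp]
  | succ N ih =>
    intro x hx
    have key : ∀ t ∈ Set.uIcc (0:ℝ) x,
        HasDerivAt (fun u : ℝ => expRem (N+1) (Complex.I * u))
          (Complex.I * expRem N (Complex.I * t)) t := by
      intro t _
      simpa using hasDerivAt_expRem_real (N+1) Complex.I t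
    have hcont : Continuous (fun t : ℝ => Complex.I * expRem N (Complex.I * t)) :=
      continuous_const.mul (continuous_expRem_real N Complex.I)
    have heq := intervalIntegral.integral_eq_sub_of_hasDerivAt key
      (hcont.intervalIntegrable 0 x)
    rw [show Complex.I * ((0:ℝ):ℂ) = 0 by simp, expRem_at_zero (N+1) (by omega), sub_zero] at heq
    calc ‖expRem (N+1) (Complex.I * x)‖
        = ‖∫ t in (0:ℝ)..x, Complex.I * expRem N (Complex.I * t)‖ := by rw [heq]
      _ ≤ ∫ t in (0:ℝ)..x, ‖Complex.I * expRem N (Complex.I * t)‖ :=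
          intervalIntegral.norm_integral_le_integral_norm hx
      _ ≤ ∫ t in (0:ℝ)..x, t ^ N / (Nat.factorial N) := by
          apply intervalIntegral.integral_mono_on hx
          · exact (hcont.norm).intervalIntegrable 0 x
          · exact ((continuous_pow N).div_const _).intervalIntegrable 0 x
          · intro t ht
            have ht0 : 0 ≤ t := ht.1
            calc ‖Complex.I * expRem N (Complex.I * t)‖
                = ‖expRem N (Complex.I * t)‖ := by
                  rw [norm_mul, Complex.norm_I, one_mul]
              _ ≤ t ^ N / (Nat.factorial N) := ih t ht0
      _ = x ^ (N+1) / (Nat.factorial (N+1)) := by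
          rw [intervalIntegral.integral_div, integral_pow]
          have : ((Nat.factorial (N+1) : ℝ)) = (N+1) * (Nat.factorial N) := by
            push_cast [Nat.factorial_succ]; ring
          rw [this]
          have h1 : ((N:ℝ)+1) ≠ 0 := by positivity
          have h2 : ((Nat.factorial N : ℝ)) ≠ 0 := by
            exact_mod_cast Nat.factorial_ne_zero N
          field_simp
          simp

lemma norm_expRem_le_two (N : ℕ) (hN : 1 ≤ N) (x : ℝ) (hx : 0 ≤ x) :
    ‖expRem N (Complex.I * x)‖ ≤ 2 * x ^ (N - 1) / (Nat.factorial (N - 1)) := by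
  obtain ⟨M, rfl⟩ : ∃ M, N = M + 1 := ⟨N - 1, by omega⟩
  rw [expRem_succ]
  have h1 : ‖((Complex.I * (x:ℂ)) ^ M / (Nat.factorial M : ℂ))‖
      = x ^ M / (Nat.factorial M) := by
    rw [norm_div, norm_pow, norm_mul]
    simp [Complex.norm_I, Complex.norm_real, Complex.norm_natCast]
    rw [_root_.abs_of_nonneg hx]
  calc ‖expRem M (Complex.I * x) - (Complex.I * (x:ℂ)) ^ M / (Nat.factorial M : ℂ)‖
      ≤ ‖expRem M (Complex.I * x)‖ + ‖((Complex.I * (x:ℂ)) ^ M / (Nat.factorial M : ℂ))‖ :=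
        norm_sub_le _ _
    _ ≤ x ^ M / (Nat.factorial M) + x ^ M / (Nat.factorial M) := by
        rw [h1]
        have := norm_expRem_le M x hx
        linarith
    _ = 2 * x ^ (M + 1 - 1) / (Nat.factorial (M + 1 - 1)) := by
        simp only [Nat.add_sub_cancel]
        ring

lemma norm_expRem_theta (N : ℕ) (hN : 1 ≤ N) (θ x : ℝ) (hθ0 : 0 ≤ θ) (hθ1 : θ ≤ 1)
    (hx : 0 ≤ x) : ‖expRem N (Complex.I * x)‖ ≤ 2 * x ^ (N - 1) * x ^ θ := by
  rcases eq_or_lt_of_le hx with h0 | h0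
  · rw [← h0]
    rw [show Complex.I * ((0:ℝ):ℂ) = 0 by simp, expRem_at_zero N hN, norm_zero]
    positivity
  · by_cases hx1 : x ≤ 1
    · have hstep : x ≤ x ^ θ := by
        calc x = x ^ (1:ℝ) := (Real.rpow_one x).symm
          _ ≤ x ^ θ := Real.rpow_le_rpow_of_exponent_ge h0 hx1 hθ1
      calc ‖expRem N (Complex.I * x)‖ ≤ x ^ N / (Nat.factorial N) := norm_expRem_le N x hx
        _ ≤ x ^ N := by
            apply div_le_self (by positivity)
            exact_mod_cast Nat.one_le_iff_ne_zero.mpr (Nat.factorial_ne_zero N)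
        _ = x ^ (N - 1) * x := by
            rw [← pow_succ]
            congr 1
            omega
        _ ≤ x ^ (N - 1) * x ^ θ := by
            apply mul_le_mul_of_nonneg_left hstep (by positivity)
        _ ≤ 2 * x ^ (N - 1) * x ^ θ := by nlinarith [Real.rpow_nonneg hx θ, pow_nonneg hx (N-1)]
    · push_neg at hx1
      have hθx : (1:ℝ) ≤ x ^ θ := Real.one_le_rpow hx1.le hθ0
      calc ‖expRem N (Complex.I * x)‖ ≤ 2 * x ^ (N - 1) / (Nat.factorial (N - 1)) :=
            norm_expRem_le_two N hN x hx
        _ ≤ 2 * x ^ (N - 1) := by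
            apply div_le_self (by positivity)
            exact_mod_cast Nat.one_le_iff_ne_zero.mpr (Nat.factorial_ne_zero (N-1))
        _ ≤ 2 * x ^ (N - 1) * x ^ θ := by nlinarith [pow_nonneg hx (N-1)]

noncomputable def cQ (n : ℕ) (r : ℝ) (q : ℕ) : ℂ :=
  (resC n : ℂ) / (r : ℂ) ^ (n - 2) *
    ((Nat.factorial (n - 3 - q) : ℂ) /
      ((Nat.factorial q : ℂ) * (Nat.factorial ((n - 3) / 2 - q) : ℂ))) *
    ((-2) * Complex.I * (r : ℂ)) ^ q

lemma gker_eq_s5 (n : ℕ) (r t : ℝ) :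
    gker n t r = ∑ q ∈ Finset.range ((n - 3) / 2 + 1), cQ n r q * hh r q 0 t := by
  unfold gker
  rw [Finset.mul_sum]
  apply Finset.sum_congr rfl
  intro q hq
  unfold cQ hh
  rw [expRem_zeroN, show Complex.I * (t:ℂ) * (r:ℂ) = Complex.I * (r:ℂ) * (t:ℂ) by ring,
    mul_pow]
  ring

lemma itD_hh_zero (r : ℝ) (q i : ℕ) :
    iteratedDeriv i (hh r q 0) 0 =
      if q ≤ i then ((i.choose q : ℂ) * (Nat.factorial q : ℂ)) * (Complex.I * r) ^ (i - q)
      else 0 := by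
  rw [iteratedDeriv_hh]
  dsimp only
  have hval : ∀ a b : ℕ, hh r a b (0:ℝ) = (0:ℂ) ^ a * expRem b 0 := by
    intro a b
    unfold hh
    norm_num
  by_cases hqi : q ≤ i
  · rw [if_pos hqi]
    rw [Finset.sum_eq_single q]
    · rw [hval]
      have h0 : (0:ℕ) - (i - q) = 0 := by omega
      rw [h0, expRem_zeroN, Complex.exp_zero, Nat.sub_self, pow_zero, one_mul, mul_one,
        Nat.descFactorial_self]
    · intro s hs hsq
      rw [hval]
      rcases lt_or_gt_of_ne hsq with h | h
      · have : (0:ℂ) ^ (q - s) = 0 := by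
          apply zero_pow
          omega
        rw [this, zero_mul, mul_zero]
      · have : q.descFactorial s = 0 := Nat.descFactorial_eq_zero_iff_lt.mpr h
        rw [this]
        simp
    · intro hq
      exact absurd (Finset.mem_range.mpr (by omega)) hq
  · rw [if_neg hqi]
    apply Finset.sum_eq_zero
    intro s hs
    rw [hval]
    have hsi : s ≤ i := by
      have := Finset.mem_range.mp hs; omega
    have : (0:ℂ) ^ (q - s) = 0 := by
      apply zero_pow
      omega
    rw [this, zero_mul, mul_zero]

lemma gTaylor_eq_s5 (n m : ℕ) (r : ℝ) (hL : (n - 3) / 2 ≤ m) (lam : ℝ) :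
    gTaylor n m lam r = ∑ q ∈ Finset.range ((n - 3) / 2 + 1), cQ n r q * (lam : ℂ) ^ q *
      ∑ k ∈ Finset.range (m + 1 - q), (Complex.I * r * lam) ^ k / (Nat.factorial k) := by
  have hg : (fun t : ℝ => gker n t r)
      = fun t => ∑ q ∈ Finset.range ((n - 3) / 2 + 1), cQ n r q * hh r q 0 t :=
    funext fun t => gker_eq_s5 n r t
  unfold gTaylor
  rw [hg]
  have hsum := itD_sum (Finset.range ((n - 3) / 2 + 1))
    (fun q => fun t => cQ n r q * hh r q 0 t)
    (fun q _ => contDiff_const.mul (contDiff_hh r q 0))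
  calc ∑ i ∈ Finset.range (m + 1),
        iteratedDeriv i (fun t => ∑ q ∈ Finset.range ((n-3)/2+1), cQ n r q * hh r q 0 t) 0
          * (lam:ℂ) ^ i / (Nat.factorial i : ℂ)
      = ∑ i ∈ Finset.range (m + 1), ∑ q ∈ Finset.range ((n-3)/2+1),
          cQ n r q * (if q ≤ i then ((i.choose q : ℂ) * (Nat.factorial q : ℂ)) *
            (Complex.I * r) ^ (i - q) else 0) * (lam:ℂ) ^ i / (Nat.factorial i : ℂ) := by
        apply Finset.sum_congr rfl
        intro i _
        rw [hsum i]
        dsimp only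
        rw [Finset.sum_mul, Finset.sum_div]
        apply Finset.sum_congr rfl
        intro q _
        rw [itD_const_mul _ _ (contDiff_hh r q 0) i]
        dsimp only
        rw [itD_hh_zero]
    _ = ∑ q ∈ Finset.range ((n-3)/2+1), ∑ i ∈ Finset.range (m + 1),
          cQ n r q * (if q ≤ i then ((i.choose q : ℂ) * (Nat.factorial q : ℂ)) *
            (Complex.I * r) ^ (i - q) else 0) * (lam:ℂ) ^ i / (Nat.factorial i : ℂ) :=
        Finset.sum_comm
    _ = _ := by
        apply Finset.sum_congr rfl
        intro q hq
        have hqL : q ≤ (n - 3) / 2 := by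
          have := Finset.mem_range.mp hq; omega
        have hqm : q ≤ m + 1 := by omega
        -- kill the ifs and restrict the range
        rw [Finset.range_eq_Ico, ← Finset.sum_Ico_consecutive
          (fun i => cQ n r q * (if q ≤ i then ((i.choose q : ℂ) * (Nat.factorial q : ℂ)) *
            (Complex.I * r) ^ (i - q) else 0) * (lam:ℂ) ^ i / (Nat.factorial i : ℂ))
          (Nat.zero_le q) hqm]
        have h1 : ∑ i ∈ Finset.Ico 0 q,
            cQ n r q * (if q ≤ i then ((i.choose q : ℂ) * (Nat.factorial q : ℂ)) *
              (Complex.I * r) ^ (i - q) else 0) * (lam:ℂ) ^ i / (Nat.factorial i : ℂ) = 0 := by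
          apply Finset.sum_eq_zero
          intro i hi
          have : ¬ q ≤ i := by
            have := (Finset.mem_Ico.mp hi).2; omega
          rw [if_neg this]
          simp
        rw [h1, zero_add, Finset.sum_Ico_eq_sum_range]
        have h2 : m + 1 - q = m + 1 - q := rfl
        rw [Finset.mul_sum]
        apply Finset.sum_congr rfl
        intro k hk
        rw [if_pos (Nat.le_add_right q k), Nat.add_sub_cancel_left]
        have hfac : ((Nat.factorial (q+k) : ℂ)) = (((q+k).choose q : ℕ) : ℂ) *
            (Nat.factorial q : ℂ) * (Nat.factorial k : ℂ) := by
          have h0 := Nat.add_choose_mul_factorial_mul_factorial q k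
          have h1 : (q + k).choose q = (q + k).choose k := by
            have := Nat.choose_symm (Nat.le_add_left k q)
            rwa [Nat.add_sub_cancel] at this
          rw [h1]
          exact_mod_cast h0.symm
        have hne1 : ((Nat.factorial (q+k) : ℂ)) ≠ 0 :=
          Nat.cast_ne_zero.mpr (Nat.factorial_ne_zero _)
        have hne2 : ((Nat.factorial k : ℂ)) ≠ 0 :=
          Nat.cast_ne_zero.mpr (Nat.factorial_ne_zero _)
        have hne3 : ((Nat.factorial q : ℂ)) ≠ 0 :=
          Nat.cast_ne_zero.mpr (Nat.factorial_ne_zero _)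
        have hne4 : (((q+k).choose q : ℕ) : ℂ) ≠ 0 :=
          Nat.cast_ne_zero.mpr (Nat.choose_pos (Nat.le_add_right q k)).ne'
        rw [mul_pow, pow_add]
        field_simp
        rw [hfac]
        ring

lemma remainder_eq (n m : ℕ) (r : ℝ) (hL : (n - 3) / 2 ≤ m) :
    (fun t : ℝ => gker n t r - gTaylor n m t r)
      = fun t => ∑ q ∈ Finset.range ((n - 3) / 2 + 1), cQ n r q * hh r q (m + 1 - q) t := by
  funext t
  rw [gker_eq_s5, gTaylor_eq_s5 n m r hL t, ← Finset.sum_sub_distrib]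
  apply Finset.sum_congr rfl
  intro q hq
  unfold hh
  rw [expRem_zeroN, expRem_def]
  ring

noncomputable def wfrac (n q : ℕ) : ℝ :=
  (Nat.factorial (n - 3 - q) : ℝ) /
    ((Nat.factorial q : ℝ) * (Nat.factorial ((n - 3) / 2 - q) : ℝ))

lemma wfrac_nonneg (n q : ℕ) : 0 ≤ wfrac n q := by
  unfold wfrac; positivity

lemma norm_cQ (n : ℕ) (r : ℝ) (hr : 0 ≤ r) (q : ℕ) :
    ‖cQ n r q‖ = |resC n| / r ^ (n - 2) * wfrac n q * (2 * r) ^ q := by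
  unfold cQ wfrac
  simp only [norm_mul, norm_div, norm_pow, Complex.norm_real, Real.norm_eq_abs,
    Complex.norm_natCast, Complex.norm_I, map_mul]
  rw [_root_.abs_of_nonneg hr]
  have h2 : ‖(-2:ℂ)‖ = 2 := by
    rw [norm_neg]
    simp
  rw [h2]
  push_cast
  ring

lemma itD_zero_fun (j : ℕ) : iteratedDeriv j (fun _ : ℝ => (0 : ℂ)) = fun _ => 0 := by
  induction j with
  | zero => simp [iteratedDeriv_zero]
  | succ j ih => rw [iteratedDeriv_succ, ih]; funext t; simp

lemma gker_r_zero (n : ℕ) (hn : 5 ≤ n) (t : ℝ) : gker n t 0 = 0 := by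
  unfold gker
  have : ((0:ℝ):ℂ) ^ (n - 2) = 0 := by
    rw [Complex.ofReal_zero]
    exact zero_pow (by omega)
  rw [this, div_zero, zero_mul]

lemma remainder_r_zero (n m j : ℕ) (hn : 5 ≤ n) (lam : ℝ) :
    iteratedDeriv j (fun t : ℝ => gker n t 0 - gTaylor n m t 0) lam = 0 := by
  have h1 : (fun t : ℝ => gker n t 0) = fun _ => (0:ℂ) := funext fun t => gker_r_zero n hn t
  have h2 : ∀ t : ℝ, gTaylor n m t 0 = 0 := by
    intro t
    unfold gTaylor
    rw [h1]
    apply Finset.sum_eq_zero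
    intro i _
    rw [itD_zero_fun i]
    simp
  have h3 : (fun t : ℝ => gker n t 0 - gTaylor n m t 0) = fun _ => (0:ℂ) := by
    funext t
    rw [gker_r_zero n hn t, h2 t, sub_zero]
  rw [h3, itD_zero_fun j]

lemma kernel_bound (n : ℕ) (hn : 5 ≤ n) (m j : ℕ)
    (hm : n - 2 ≤ m) (hjm : j + (n - 3) / 2 ≤ m) (θ : ℝ) (hθ0 : 0 ≤ θ) (hθ1 : θ ≤ 1) :
    ∃ K : ℝ, 0 < K ∧ ∀ r : ℝ, 0 ≤ r → ∀ lam : ℝ, 0 < lam → lam ≤ 1 →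
      ‖iteratedDeriv j (fun t : ℝ => gker n t r - gTaylor n m t r) lam‖ ≤
        K * lam ^ ((m : ℝ) - j + θ) * (1 + r) ^ ((m : ℝ) - ((n : ℝ) - 2) + θ) := by
  set L := (n - 3) / 2 with hL
  set E := (m : ℝ) - j + θ with hE
  set A := (m : ℝ) - ((n : ℝ) - 2) + θ with hA
  set B : ℕ → ℕ → ℝ := fun q s =>
    ((j.choose s : ℝ) * (q.descFactorial s : ℝ)) * (|resC n| * wfrac n q * 2 ^ q) * 2 with hB
  have hBnn : ∀ q s, 0 ≤ B q s := by
    intro q s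
    have := wfrac_nonneg n q
    have := abs_nonneg (resC n)
    positivity
  have hKnn : (0:ℝ) ≤ ∑ q ∈ Finset.range (L+1), ∑ s ∈ Finset.range (j+1), B q s :=
    Finset.sum_nonneg fun q _ => Finset.sum_nonneg fun s _ => hBnn q s
  refine ⟨(∑ q ∈ Finset.range (L+1), ∑ s ∈ Finset.range (j+1), B q s) + 1, by linarith, ?_⟩
  intro r hr lam hlam hlam1
  have h1r : (0:ℝ) < 1 + r := by linarith
  have hXnn : 0 ≤ lam ^ E * (1 + r) ^ A :=
    mul_nonneg (Real.rpow_nonneg hlam.le E) (Real.rpow_nonneg h1r.le A)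
  rcases eq_or_lt_of_le hr with hr0 | hr0
  · rw [← hr0, remainder_r_zero n m j hn lam, norm_zero, mul_assoc]
    exact mul_nonneg (by linarith)
      (mul_nonneg (Real.rpow_nonneg hlam.le E) (Real.rpow_nonneg (by norm_num) A))
  -- r > 0
  have hjm' : j ≤ m := by omega
  have hLm : L ≤ m := by omega
  rw [remainder_eq n m r hLm,
    itD_sum _ _ (fun q _ => contDiff_const.mul (contDiff_hh r q (m + 1 - q))) j]
  have key : ∀ q ∈ Finset.range (L+1), ∀ s ∈ Finset.range (j+1),
      ‖cQ n r q‖ * ‖((j.choose s : ℂ) * (q.descFactorial s : ℂ)) *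
        (Complex.I * r) ^ (j - s) * hh r (q - s) (m + 1 - q - (j - s)) lam‖ ≤
        B q s * (lam ^ E * (1 + r) ^ A) := by
    intro q hq s hs
    have hqL : q ≤ L := by have := Finset.mem_range.mp hq; omega
    have hsj : s ≤ j := by have := Finset.mem_range.mp hs; omega
    by_cases hsq : s ≤ q
    · -- main case
      set M := m + 1 - q - (j - s) with hM
      have hM1 : 1 ≤ M := by omega
      have harg : Complex.I * (r:ℂ) * (lam:ℂ) = Complex.I * ((r * lam : ℝ) : ℂ) := by
        push_cast; ring
      have hhh : ‖hh r (q - s) M lam‖ = lam ^ (q - s) * ‖expRem M (Complex.I * ((r*lam:ℝ):ℂ))‖ := by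
        unfold hh
        rw [norm_mul, norm_pow, Complex.norm_real, Real.norm_eq_abs,
          _root_.abs_of_nonneg hlam.le, harg]
      have hexp : ‖expRem M (Complex.I * ((r*lam:ℝ):ℂ))‖ ≤
          2 * (r*lam) ^ (M - 1) * (r*lam) ^ θ :=
        norm_expRem_theta M hM1 θ (r*lam) hθ0 hθ1 (by positivity)
      have hIr : ‖(Complex.I * (r:ℂ)) ^ (j - s)‖ = r ^ (j - s) := by
        rw [norm_pow, norm_mul, Complex.norm_I,
          Complex.norm_real, Real.norm_eq_abs, _root_.abs_of_nonneg hr, one_mul]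
      have hCdF : ‖((j.choose s : ℂ) * (q.descFactorial s : ℂ))‖ =
          (j.choose s : ℝ) * (q.descFactorial s : ℝ) := by
        rw [norm_mul, Complex.norm_natCast, Complex.norm_natCast]
      calc ‖cQ n r q‖ * ‖((j.choose s : ℂ) * (q.descFactorial s : ℂ)) *
            (Complex.I * r) ^ (j - s) * hh r (q - s) M lam‖
          = ‖cQ n r q‖ * ((j.choose s : ℝ) * (q.descFactorial s : ℝ) * r ^ (j - s) *
              (lam ^ (q - s) * ‖expRem M (Complex.I * ((r*lam:ℝ):ℂ))‖)) := by
            rw [norm_mul, norm_mul, hCdF, hIr, hhh]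
        _ ≤ ‖cQ n r q‖ * ((j.choose s : ℝ) * (q.descFactorial s : ℝ) * r ^ (j - s) *
              (lam ^ (q - s) * (2 * (r*lam) ^ (M - 1) * (r*lam) ^ θ))) := by
            apply mul_le_mul_of_nonneg_left _ (norm_nonneg _)
            apply mul_le_mul_of_nonneg_left _ (by positivity)
            exact mul_le_mul_of_nonneg_left hexp (by positivity)
        _ ≤ B q s * (lam ^ E * (1 + r) ^ A) := by
            rw [norm_cQ n r hr q]
            set a := j - s with ha
            set b := M - 1 with hb
            set c := q - s with hc
            set d := m - j with hd
            set e := m - (n - 2) with he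
            set f := n - 2 with hf
            have h2r : (2 * r) ^ q = 2 ^ q * r ^ q := mul_pow 2 r q
            have hrl1 : (r * lam) ^ b = r ^ b * lam ^ b := mul_pow r lam b
            have hrl2 : (r * lam) ^ θ = r ^ θ * lam ^ θ := Real.mul_rpow hr hlam.le
            have key1 : r ^ q * r ^ a * r ^ b = r ^ f * r ^ e := by
              rw [← pow_add, ← pow_add, ← pow_add]
              congr 1
              omega
            have key2 : lam ^ c * lam ^ b = lam ^ d := by
              rw [← pow_add]
              congr 1
              omega
            have hlamE : (lam : ℝ) ^ d * lam ^ θ = lam ^ E := by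
              rw [← Real.rpow_natCast lam d, ← Real.rpow_add hlam]
              congr 1
              rw [hd, hE]
              push_cast [Nat.cast_sub hjm']
              ring
            have hrA : r ^ e * r ^ θ ≤ (1 + r) ^ A := by
              have hstep1 : r ^ e ≤ (1 + r) ^ e := pow_le_pow_left₀ hr (by linarith) e
              have hstep2 : r ^ θ ≤ (1 + r) ^ θ := Real.rpow_le_rpow hr (by linarith) hθ0
              calc r ^ e * r ^ θ ≤ (1 + r) ^ e * (1 + r) ^ θ :=
                    mul_le_mul hstep1 hstep2 (Real.rpow_nonneg hr θ) (by positivity)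
                _ = (1 + r) ^ A := by
                    rw [← Real.rpow_natCast (1+r) e, ← Real.rpow_add h1r]
                    congr 1
                    rw [he, hA]
                    have h2n : (2:ℕ) ≤ n := by omega
                    have hn2m : n - 2 ≤ m := hm
                    rw [hf]
                    push_cast [Nat.cast_sub hn2m, Nat.cast_sub h2n]
                    ring
            have hfne : r ^ f ≠ 0 := pow_ne_zero f (ne_of_gt hr0)
            calc |resC n| / r ^ f * wfrac n q * (2 * r) ^ q *
                  ((j.choose s : ℝ) * (q.descFactorial s : ℝ) * r ^ a *
                    (lam ^ c * (2 * (r * lam) ^ b * (r * lam) ^ θ)))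
                = ((j.choose s : ℝ) * (q.descFactorial s : ℝ)) * (|resC n| * wfrac n q * 2 ^ q) * 2 *
                    ((r ^ q * r ^ a * r ^ b) / r ^ f) * r ^ θ * (lam ^ c * lam ^ b) * lam ^ θ := by
                  rw [h2r, hrl1, hrl2]
                  ring
              _ = B q s * ((lam ^ d * lam ^ θ) * (r ^ e * r ^ θ)) := by
                  rw [key1, key2, mul_div_cancel_left₀ _ hfne, hB]
                  ring
              _ = B q s * (lam ^ E * (r ^ e * r ^ θ)) := by rw [hlamE]
              _ ≤ B q s * (lam ^ E * (1 + r) ^ A) := by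
                  apply mul_le_mul_of_nonneg_left _ (hBnn q s)
                  exact mul_le_mul_of_nonneg_left hrA (Real.rpow_nonneg hlam.le E)

    · -- s > q : term is zero
      have hdF : (q.descFactorial s : ℂ) = 0 := by
        rw [Nat.descFactorial_eq_zero_iff_lt.mpr (by omega)]
        simp
      have hz : ((j.choose s : ℂ) * (q.descFactorial s : ℂ)) *
          (Complex.I * r) ^ (j - s) * hh r (q - s) (m + 1 - q - (j - s)) lam = 0 := by
        rw [hdF]
        ring
      rw [hz, norm_zero, mul_zero]
      exact mul_nonneg (hBnn q s) hXnn
  have hrw : ∀ q, iteratedDeriv j (fun t => cQ n r q * hh r q (m + 1 - q) t) lam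
      = cQ n r q * iteratedDeriv j (hh r q (m + 1 - q)) lam := fun q => by
    rw [itD_const_mul _ _ (contDiff_hh r q (m + 1 - q)) j]
  dsimp only
  calc ‖∑ q ∈ Finset.range (L+1), iteratedDeriv j
          ((fun q => fun t => cQ n r q * hh r q (m + 1 - q) t) q) lam‖
      = ‖∑ q ∈ Finset.range (L+1), cQ n r q *
          ∑ s ∈ Finset.range (j+1), ((j.choose s : ℂ) * (q.descFactorial s : ℂ)) *
            (Complex.I * r) ^ (j - s) * hh r (q - s) (m + 1 - q - (j - s)) lam‖ := by
        congr 1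
        apply Finset.sum_congr rfl
        intro q _
        rw [hrw q, iteratedDeriv_hh]
    _ ≤ ∑ q ∈ Finset.range (L+1), ‖cQ n r q *
          ∑ s ∈ Finset.range (j+1), ((j.choose s : ℂ) * (q.descFactorial s : ℂ)) *
            (Complex.I * r) ^ (j - s) * hh r (q - s) (m + 1 - q - (j - s)) lam‖ :=
        norm_sum_le _ _
    _ ≤ ∑ q ∈ Finset.range (L+1), ∑ s ∈ Finset.range (j+1), ‖cQ n r q‖ *
          ‖((j.choose s : ℂ) * (q.descFactorial s : ℂ)) *
            (Complex.I * r) ^ (j - s) * hh r (q - s) (m + 1 - q - (j - s)) lam‖ := by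
        apply Finset.sum_le_sum
        intro q _
        rw [norm_mul, ← Finset.mul_sum]
        exact mul_le_mul_of_nonneg_left (norm_sum_le _ _) (norm_nonneg _)
    _ ≤ ∑ q ∈ Finset.range (L+1), ∑ s ∈ Finset.range (j+1), B q s * (lam ^ E * (1 + r) ^ A) :=
        Finset.sum_le_sum fun q hq => Finset.sum_le_sum fun s hs => key q hq s hs
    _ = (∑ q ∈ Finset.range (L+1), ∑ s ∈ Finset.range (j+1), B q s) * (lam ^ E * (1 + r) ^ A) := by
        simp only [← Finset.sum_mul]
    _ ≤ ((∑ q ∈ Finset.range (L+1), ∑ s ∈ Finset.range (j+1), B q s) + 1) *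
          (lam ^ E * (1 + r) ^ A) := by
        apply mul_le_mul_of_nonneg_right _ hXnn
        linarith
    _ = ((∑ q ∈ Finset.range (L+1), ∑ s ∈ Finset.range (j+1), B q s) + 1) *
          lam ^ E * (1 + r) ^ A := by ring

lemma HS_case (n : ℕ) (hn : 5 ≤ n)
    (θ : ℝ) (hθ0 : 0 ≤ θ) (hθ1 : θ ≤ 1)
    (v : EuclideanSpace ℝ (Fin n) → ℝ) (C₀ β : ℝ) (hv0 : ∀ x, 0 ≤ v x)
    (hv : ∀ x, v x ≤ C₀ * (1 + ‖x‖) ^ (-β))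
    (m : ℕ) (hm : n - 2 ≤ m)
    (hβ : (n : ℝ) / 2 + ((m : ℝ) - ((n : ℝ) - 2)) + θ < β) :
    ∃ C : ℝ, 0 < C ∧ ∀ j : ℕ, j + (n - 3) / 2 ≤ m → ∀ lam : ℝ, 0 < lam → lam ≤ 1 →
      Real.sqrt (∫ p : EuclideanSpace ℝ (Fin n) × EuclideanSpace ℝ (Fin n),
          (v p.1 * ‖iteratedDeriv j
              (fun t : ℝ => gker n t ‖p.1 - p.2‖ - gTaylor n m t ‖p.1 - p.2‖) lam‖ *
            v p.2) ^ 2) ≤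
        C * lam ^ ((m : ℝ) - (j : ℝ) + θ) := by
  have hC₀ : 0 ≤ C₀ := by
    have h := hv 0
    have h0 := hv0 0
    rw [norm_zero, add_zero, Real.one_rpow, mul_one] at h
    linarith
  set A := (m : ℝ) - ((n : ℝ) - 2) + θ with hA
  have hmn : ((n : ℝ) - 2) ≤ (m : ℝ) := by
    have : ((n - 2 : ℕ) : ℝ) ≤ (m : ℝ) := Nat.cast_le.mpr hm
    rw [Nat.cast_sub (by omega)] at this
    push_cast at this
    linarith
  have hA0 : 0 ≤ A := by rw [hA]; linarith
  set Bex := 2 * (β - A) with hBe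
  have hnB : (n : ℝ) < Bex := by rw [hBe, hA]; linarith
  have hψint : Integrable (fun x : EuclideanSpace ℝ (Fin n) => (1 + ‖x‖) ^ (-Bex)) := by
    apply integrable_one_add_norm
    rw [finrank_euclideanSpace_fin]
    exact hnB
  set ψ : EuclideanSpace ℝ (Fin n) → ℝ := fun x => C₀ ^ 2 * (1 + ‖x‖) ^ (-Bex) with hψdef
  have hψ : Integrable ψ := hψint.const_mul _
  have hψnn : ∀ x, 0 ≤ ψ x := fun x => by
    rw [hψdef]
    exact mul_nonneg (by positivity) (Real.rpow_nonneg (by positivity) _)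
  set Iψ := ∫ x : EuclideanSpace ℝ (Fin n), ψ x with hIψ
  have hIψnn : 0 ≤ Iψ := integral_nonneg hψnn
  set φ : EuclideanSpace ℝ (Fin n) → ℝ := fun x => C₀ * (1 + ‖x‖) ^ (A - β) with hφdef
  have hφnn : ∀ x, 0 ≤ φ x := fun x => by
    rw [hφdef]
    exact mul_nonneg hC₀ (Real.rpow_nonneg (by positivity) _)
  have hφψ : ∀ x, (φ x) ^ 2 = ψ x := by
    intro x
    rw [hφdef, hψdef]
    have h1x : (0:ℝ) < 1 + ‖x‖ := by positivity
    have : ((1 + ‖x‖) ^ (A - β)) ^ 2 = (1 + ‖x‖) ^ (-Bex) := by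
      rw [sq, ← Real.rpow_add h1x]
      congr 1
      rw [hBe]; ring
    rw [mul_pow, this]
  -- per-j kernel constants
  have hK : ∀ j : ℕ, ∃ K : ℝ, 0 < K ∧ (j + (n - 3) / 2 ≤ m →
      ∀ r : ℝ, 0 ≤ r → ∀ lam : ℝ, 0 < lam → lam ≤ 1 →
        ‖iteratedDeriv j (fun t : ℝ => gker n t r - gTaylor n m t r) lam‖ ≤
          K * lam ^ ((m : ℝ) - j + θ) * (1 + r) ^ A) := by
    intro j
    by_cases hj : j + (n - 3) / 2 ≤ m
    · obtain ⟨K, hK0, hKb⟩ := kernel_bound n hn m j hm hj θ hθ0 hθ1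
      exact ⟨K, hK0, fun _ => hKb⟩
    · exact ⟨1, one_pos, fun h => absurd h hj⟩
  choose Kf hKf0 hKfb using hK
  refine ⟨(∑ j' ∈ Finset.range (m + 1), Kf j') * Iψ + 1, ?_, ?_⟩
  · have : 0 ≤ ∑ j' ∈ Finset.range (m + 1), Kf j' :=
      Finset.sum_nonneg fun j' _ => (hKf0 j').le
    nlinarith
  intro j hj lam hlam hlam1
  set E := (m : ℝ) - (j : ℝ) + θ with hE
  have hlamE : 0 < lam ^ E := Real.rpow_pos_of_pos hlam E
  set D : EuclideanSpace ℝ (Fin n) × EuclideanSpace ℝ (Fin n) → ℝ := fun p =>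
    ‖iteratedDeriv j
      (fun t : ℝ => gker n t ‖p.1 - p.2‖ - gTaylor n m t ‖p.1 - p.2‖) lam‖ with hD
  have hpt : ∀ p : EuclideanSpace ℝ (Fin n) × EuclideanSpace ℝ (Fin n),
      (v p.1 * D p * v p.2) ^ 2 ≤ ((Kf j * lam ^ E) ^ 2 * ψ p.1) * ψ p.2 := by
    intro p
    have hx1 : (0:ℝ) < 1 + ‖p.1‖ := by positivity
    have hy1 : (0:ℝ) < 1 + ‖p.2‖ := by positivity
    have htri : 1 + ‖p.1 - p.2‖ ≤ (1 + ‖p.1‖) * (1 + ‖p.2‖) := by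
      have := norm_sub_le p.1 p.2
      nlinarith [norm_nonneg p.1, norm_nonneg p.2]
    have hDb : D p ≤ Kf j * lam ^ E * ((1 + ‖p.1‖) ^ A * (1 + ‖p.2‖) ^ A) := by
      calc D p ≤ Kf j * lam ^ E * (1 + ‖p.1 - p.2‖) ^ A :=
            hKfb j hj ‖p.1 - p.2‖ (norm_nonneg _) lam hlam hlam1
        _ ≤ Kf j * lam ^ E * ((1 + ‖p.1‖) * (1 + ‖p.2‖)) ^ A := by
            apply mul_le_mul_of_nonneg_left _ (mul_nonneg (hKf0 j).le hlamE.le)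
            exact Real.rpow_le_rpow (by positivity) htri hA0
        _ = Kf j * lam ^ E * ((1 + ‖p.1‖) ^ A * (1 + ‖p.2‖) ^ A) := by
            rw [Real.mul_rpow hx1.le hy1.le]
    have h1 : v p.1 * D p * v p.2 ≤ Kf j * lam ^ E * (φ p.1 * φ p.2) := by
      have hb1 : (0:ℝ) ≤ C₀ * (1 + ‖p.1‖) ^ (-β) :=
        mul_nonneg hC₀ (Real.rpow_nonneg hx1.le _)
      have hb2nn : (0:ℝ) ≤ Kf j * lam ^ E * ((1 + ‖p.1‖) ^ A * (1 + ‖p.2‖) ^ A) := by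
        have := (hKf0 j).le
        have := Real.rpow_nonneg hx1.le A
        have := Real.rpow_nonneg hy1.le A
        positivity
      have step : v p.1 * D p * v p.2 ≤
          (C₀ * (1 + ‖p.1‖) ^ (-β)) * (Kf j * lam ^ E *
            ((1 + ‖p.1‖) ^ A * (1 + ‖p.2‖) ^ A)) * (C₀ * (1 + ‖p.2‖) ^ (-β)) := by
        apply mul_le_mul _ (hv p.2) (hv0 p.2) (mul_nonneg hb1 hb2nn)
        exact mul_le_mul (hv p.1) hDb (norm_nonneg _) hb1
      have hmerge1 : (1 + ‖p.1‖) ^ (A - β) = (1 + ‖p.1‖) ^ (-β) * (1 + ‖p.1‖) ^ A := by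
        rw [← Real.rpow_add hx1]; congr 1; ring
      have hmerge2 : (1 + ‖p.2‖) ^ (A - β) = (1 + ‖p.2‖) ^ (-β) * (1 + ‖p.2‖) ^ A := by
        rw [← Real.rpow_add hy1]; congr 1; ring
      calc v p.1 * D p * v p.2 ≤ _ := step
        _ = Kf j * lam ^ E * (φ p.1 * φ p.2) := by
            rw [hφdef]
            dsimp only
            rw [hmerge1, hmerge2]
            ring
    have hLnn : 0 ≤ v p.1 * D p * v p.2 :=
      mul_nonneg (mul_nonneg (hv0 p.1) (norm_nonneg _)) (hv0 p.2)
    calc (v p.1 * D p * v p.2) ^ 2 ≤ (Kf j * lam ^ E * (φ p.1 * φ p.2)) ^ 2 :=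
          pow_le_pow_left₀ hLnn h1 2
      _ = ((Kf j * lam ^ E) ^ 2 * ψ p.1) * ψ p.2 := by
          rw [← hφψ p.1, ← hφψ p.2]
          ring
  -- integrate
  have hGint : Integrable (fun p : EuclideanSpace ℝ (Fin n) × EuclideanSpace ℝ (Fin n) =>
      ((Kf j * lam ^ E) ^ 2 * ψ p.1) * ψ p.2) := by
    rw [MeasureTheory.Measure.volume_eq_prod]
    exact (hψ.const_mul _).mul_prod hψ
  have hmono : (∫ p : EuclideanSpace ℝ (Fin n) × EuclideanSpace ℝ (Fin n),
      (v p.1 * D p * v p.2) ^ 2) ≤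
      ∫ p : EuclideanSpace ℝ (Fin n) × EuclideanSpace ℝ (Fin n),
        ((Kf j * lam ^ E) ^ 2 * ψ p.1) * ψ p.2 := by
    apply integral_mono_of_nonneg
    · exact Filter.Eventually.of_forall fun p => sq_nonneg _
    · exact hGint
    · exact Filter.Eventually.of_forall hpt
  have hGval : (∫ p : EuclideanSpace ℝ (Fin n) × EuclideanSpace ℝ (Fin n),
      ((Kf j * lam ^ E) ^ 2 * ψ p.1) * ψ p.2) = (Kf j * lam ^ E * Iψ) ^ 2 := by
    rw [MeasureTheory.Measure.volume_eq_prod, MeasureTheory.integral_prod_mul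
      (fun x => (Kf j * lam ^ E) ^ 2 * ψ x) ψ, MeasureTheory.integral_const_mul]
    rw [← hIψ]
    ring
  have hsq : Real.sqrt (∫ p : EuclideanSpace ℝ (Fin n) × EuclideanSpace ℝ (Fin n),
      (v p.1 * D p * v p.2) ^ 2) ≤ Kf j * lam ^ E * Iψ := by
    have h2 : (∫ p : EuclideanSpace ℝ (Fin n) × EuclideanSpace ℝ (Fin n),
        (v p.1 * D p * v p.2) ^ 2) ≤ (Kf j * lam ^ E * Iψ) ^ 2 := by
      rw [← hGval]; exact hmono
    calc Real.sqrt (∫ p : EuclideanSpace ℝ (Fin n) × EuclideanSpace ℝ (Fin n),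
          (v p.1 * D p * v p.2) ^ 2) ≤ Real.sqrt ((Kf j * lam ^ E * Iψ) ^ 2) :=
          Real.sqrt_le_sqrt h2
      _ = Kf j * lam ^ E * Iψ := by
          rw [Real.sqrt_sq (mul_nonneg (mul_nonneg (hKf0 j).le hlamE.le) hIψnn)]
  calc Real.sqrt (∫ p : EuclideanSpace ℝ (Fin n) × EuclideanSpace ℝ (Fin n),
        (v p.1 * ‖iteratedDeriv j
            (fun t : ℝ => gker n t ‖p.1 - p.2‖ - gTaylor n m t ‖p.1 - p.2‖) lam‖ *
          v p.2) ^ 2) ≤ Kf j * lam ^ E * Iψ := hsq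
    _ = (Kf j * Iψ) * lam ^ E := by ring
    _ ≤ ((∑ j' ∈ Finset.range (m + 1), Kf j') * Iψ + 1) * lam ^ E := by
        apply mul_le_mul_of_nonneg_right _ hlamE.le
        have hjm : j ∈ Finset.range (m + 1) := Finset.mem_range.mpr (by omega)
        have hle : Kf j ≤ ∑ j' ∈ Finset.range (m + 1), Kf j' :=
          Finset.single_le_sum (fun j' _ => (hKf0 j').le) hjm
        nlinarith

/-- Hilbert–Schmidt bounds for the weighted resolvent remainders `v E_j^{±}(λ) v`
(Lemma 2.2/2.5 of the paper): with `v(x) ≤ C₀⟨x⟩^{−β}` and `0 ≤ ℓ ≤ 1`,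
(i) if `β > n/2 + ℓ` then `‖v ∂_λ^j(g_n − T_{n−2}) v‖_{HS} ≲ λ^{n−2+ℓ−j}` for `j ≤ (n−1)/2`;
(ii) if `β > n/2 + 2 + ℓ` then `‖v ∂_λ^j(g_n − T_n) v‖_{HS} ≲ λ^{n+ℓ−j}` for `j ≤ (n+1)/2`;
(iii) if `β > n/2 + 4 + ℓ` then `‖v ∂_λ^j(g_n − T_{n+2}) v‖_{HS} ≲ λ^{n+2+ℓ−j}` for `j ≤ (n+1)/2`. -/
theorem weighted_resolvent_remainder_HS (n : ℕ) (hn : 5 ≤ n) (hodd : Odd n)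
    (l : ℝ) (hl0 : 0 ≤ l) (hl1 : l ≤ 1)
    (v : EuclideanSpace ℝ (Fin n) → ℝ) (C₀ β : ℝ) (hv0 : ∀ x, 0 ≤ v x)
    (hv : ∀ x, v x ≤ C₀ * (1 + ‖x‖) ^ (-β)) :
    (((n : ℝ) / 2 + l < β →
      ∃ C : ℝ, 0 < C ∧ ∀ j : ℕ, j ≤ (n - 1) / 2 → ∀ lam : ℝ, 0 < lam → lam ≤ 1 →
        Real.sqrt (∫ p : EuclideanSpace ℝ (Fin n) × EuclideanSpace ℝ (Fin n),
            (v p.1 * ‖iteratedDeriv j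
                (fun t : ℝ => gker n t ‖p.1 - p.2‖ - gTaylor n (n - 2) t ‖p.1 - p.2‖) lam‖ *
              v p.2) ^ 2) ≤
          C * lam ^ ((n : ℝ) - 2 + l - (j : ℝ)))) ∧
    (((n : ℝ) / 2 + 2 + l < β →
      ∃ C : ℝ, 0 < C ∧ ∀ j : ℕ, j ≤ (n + 1) / 2 → ∀ lam : ℝ, 0 < lam → lam ≤ 1 →
        Real.sqrt (∫ p : EuclideanSpace ℝ (Fin n) × EuclideanSpace ℝ (Fin n),
            (v p.1 * ‖iteratedDeriv j
                (fun t : ℝ => gker n t ‖p.1 - p.2‖ - gTaylor n n t ‖p.1 - p.2‖) lam‖ *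
              v p.2) ^ 2) ≤
          C * lam ^ ((n : ℝ) + l - (j : ℝ)))) ∧
    (((n : ℝ) / 2 + 4 + l < β →
      ∃ C : ℝ, 0 < C ∧ ∀ j : ℕ, j ≤ (n + 1) / 2 → ∀ lam : ℝ, 0 < lam → lam ≤ 1 →
        Real.sqrt (∫ p : EuclideanSpace ℝ (Fin n) × EuclideanSpace ℝ (Fin n),
            (v p.1 * ‖iteratedDeriv j
                (fun t : ℝ => gker n t ‖p.1 - p.2‖ - gTaylor n (n + 2) t ‖p.1 - p.2‖) lam‖ *
              v p.2) ^ 2) ≤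
          C * lam ^ ((n : ℝ) + 2 + l - (j : ℝ)))) := by
  obtain ⟨k, hk⟩ := hodd
  have hc2 : ((n - 2 : ℕ) : ℝ) = (n : ℝ) - 2 := by
    rw [Nat.cast_sub (by omega)]
    norm_num
  refine ⟨?_, ?_, ?_⟩
  · intro hβ
    obtain ⟨C, hC0, hCb⟩ := HS_case n hn l hl0 hl1 v C₀ β hv0 hv (n - 2) le_rfl
      (by rw [hc2]; linarith)
    refine ⟨C, hC0, ?_⟩
    intro j hj lam hlam hlam1
    have hj' : j + (n - 3) / 2 ≤ n - 2 := by omega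
    have h := hCb j hj' lam hlam hlam1
    rw [show ((n - 2 : ℕ) : ℝ) - (j : ℝ) + l = (n : ℝ) - 2 + l - (j : ℝ) by rw [hc2]; ring] at h
    exact h
  · intro hβ
    obtain ⟨C, hC0, hCb⟩ := HS_case n hn l hl0 hl1 v C₀ β hv0 hv n (by omega)
      (by rw [hc2] at *; linarith)
    refine ⟨C, hC0, ?_⟩
    intro j hj lam hlam hlam1
    have hj' : j + (n - 3) / 2 ≤ n := by omega
    have h := hCb j hj' lam hlam hlam1
    rw [show (n : ℝ) - (j : ℝ) + l = (n : ℝ) + l - (j : ℝ) by ring] at h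
    exact h
  · intro hβ
    obtain ⟨C, hC0, hCb⟩ := HS_case n hn l hl0 hl1 v C₀ β hv0 hv (n + 2) (by omega)
      (by push_cast; linarith)
    refine ⟨C, hC0, ?_⟩
    intro j hj lam hlam hlam1
    have hj' : j + (n - 3) / 2 ≤ n + 2 := by omega
    have h := hCb j hj' lam hlam hlam1
    rw [show ((n + 2 : ℕ) : ℝ) - (j : ℝ) + l = (n : ℝ) + 2 + l - (j : ℝ) by push_cast; ring] at h
    exact h
end

section
/- Let ℋ be a complex Hilbert space, let A : ℋ → ℋ be a bounded linear operator, and let S : ℋ → ℋ be a bounded linear projection (S∘S = S). Suppose A + S has a bounded inverse on ℋ. Then A has a bounded inverse on ℋ if and only if the operator B := S − S (A+S)^{−1} S, restricted to the subspace Sℋ = range(S), has a bounded inverse on Sℋ. Moreover, in that case A^{−1} = (A+S)^{−1} + (A+S)^{−1} S B^{−1} S (A+S)^{−1}, where B^{−1} denotes the inverse of B on Sℋ (composed with S on either side). -/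
open ContinuousLinearMap

theorem jn_ring {R : Type*} [Ring R] (a s t : R) (hs : s * s = s)
    (h1 : (a + s) * t = 1) (h2 : t * (a + s) = 1) :
    ((∃ c, a * c = 1 ∧ c * a = 1) ↔
      (∃ b', b' = s * (b' * s) ∧ (s - s * (t * s)) * b' = s ∧ b' * (s - s * (t * s)) = s)) ∧
    (∀ b', b' = s * (b' * s) → (s - s * (t * s)) * b' = s → b' * (s - s * (t * s)) = s →
      a * (t + t * (b' * t)) = 1 ∧ (t + t * (b' * t)) * a = 1) := by
  rw [add_mul] at h1
  rw [mul_add] at h2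
  have hat : a * t = 1 - s * t := eq_sub_of_add_eq h1
  have hta : t * a = 1 - t * s := eq_sub_of_add_eq h2
  have hs' : ∀ x : R, s * (s * x) = s * x := fun x => by rw [← mul_assoc, hs]
  have main : ∀ b', b' = s * (b' * s) → (s - s * (t * s)) * b' = s →
      b' * (s - s * (t * s)) = s →
      a * (t + t * (b' * t)) = 1 ∧ (t + t * (b' * t)) * a = 1 := by
    intro b' hb hB1 hB2
    have hsb : s * b' = b' := by
      conv_lhs => rw [hb, hs' (b' * s)]
      exact hb.symm
    have hbs : b' * s = b' := by
      conv_lhs => rw [hb, mul_assoc, mul_assoc, hs]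
      exact hb.symm
    have hK : b' - s * (t * b') = s := by
      have h : (s - s * (t * s)) * b' = b' - s * (t * b') := by
        rw [sub_mul, hsb, mul_assoc, mul_assoc, hsb]
      rw [← h]; exact hB1
    have hK2 : b' - b' * (t * s) = s := by
      have h : b' * (s - s * (t * s)) = b' - b' * (t * s) := by
        rw [mul_sub, hbs, ← mul_assoc, hbs]
      rw [← h]; exact hB2
    constructor
    · have h5 : b' * t - s * (t * (b' * t)) = s * t := by
        rw [show s * (t * (b' * t)) = (s * (t * b')) * t by rw [mul_assoc, mul_assoc],
          ← sub_mul, hK]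
      have hat' : a * (t * (b' * t)) = b' * t - s * (t * (b' * t)) := by
        rw [← mul_assoc, hat, sub_mul, one_mul, mul_assoc]
      rw [mul_add, hat, hat', h5]
      abel
    · have hta' : (t * (b' * t)) * a = t * b' - t * (b' * (t * s)) := by
        rw [mul_assoc, mul_assoc, hta, mul_sub, mul_one, mul_sub]
      have h6 : t * b' - t * (b' * (t * s)) = t * s := by rw [← mul_sub, hK2]
      rw [add_mul, hta, hta', h6]
      abel
  refine ⟨⟨?_, ?_⟩, main⟩
  · rintro ⟨c, hac, hca⟩
    have hct : t = c - c * (s * t) := by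
      have h : (c * a) * t = c * (1 - s * t) := by rw [mul_assoc, hat]
      rw [hca, one_mul, mul_sub, mul_one] at h
      exact h
    have htc : t = c - (t * s) * c := by
      have h : t * (a * c) = (1 - t * s) * c := by rw [← mul_assoc, hta]
      rw [hac, mul_one, sub_mul, one_mul] at h
      exact h
    refine ⟨s + s * (c * s), ?_, ?_, ?_⟩
    · simp only [add_mul, mul_add, mul_assoc, hs, hs']
    · have key1 : s * (t * s) + s * (t * (s * (c * s))) = s * (c * s) := by
        nth_rewrite 1 [htc]
        simp only [sub_mul, mul_sub, mul_assoc]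
        abel
      simp only [sub_mul, mul_add, add_mul, mul_sub, mul_assoc, hs, hs']
      nth_rewrite 1 [← key1]
      abel
    · have key2 : s * (t * s) + s * (c * (s * (t * s))) = s * (c * s) := by
        nth_rewrite 1 [hct]
        simp only [sub_mul, mul_sub, mul_add, mul_assoc]
        abel
      simp only [sub_mul, mul_add, add_mul, mul_sub, mul_assoc, hs, hs']
      nth_rewrite 1 [← key2]
      abel
  · rintro ⟨b', hb, hB1, hB2⟩
    exact ⟨t + t * (b' * t), main b' hb hB1 hB2⟩


/-- The Jensen–Nenciu inversion lemma (Lemma 2.1 in [JN]): if `S` is a bounded projection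
on a Hilbert space `H` and `A + S` has bounded inverse `T`, then `A` has a bounded inverse
iff `B = S − S(A+S)⁻¹S` has a bounded inverse on `SH` (namely an operator `B' = S B' S`
with `B B' = B' B = S`), in which case `A⁻¹ = (A+S)⁻¹ + (A+S)⁻¹ S B⁻¹ S (A+S)⁻¹`. -/
theorem jensen_nenciu_inversion {H : Type*} [NormedAddCommGroup H]
    [InnerProductSpace ℂ H] [CompleteSpace H]
    (A S T : H →L[ℂ] H) (hS : S.comp S = S)
    (hT1 : (A + S).comp T = ContinuousLinearMap.id ℂ H)
    (hT2 : T.comp (A + S) = ContinuousLinearMap.id ℂ H) :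
    ((∃ Ainv : H →L[ℂ] H, A.comp Ainv = ContinuousLinearMap.id ℂ H ∧
        Ainv.comp A = ContinuousLinearMap.id ℂ H) ↔
      (∃ B' : H →L[ℂ] H, B' = S.comp (B'.comp S) ∧
        (S - S.comp (T.comp S)).comp B' = S ∧ B'.comp (S - S.comp (T.comp S)) = S)) ∧
    (∀ B' : H →L[ℂ] H, B' = S.comp (B'.comp S) →
      (S - S.comp (T.comp S)).comp B' = S → B'.comp (S - S.comp (T.comp S)) = S →
      A.comp (T + T.comp (B'.comp T)) = ContinuousLinearMap.id ℂ H ∧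
      (T + T.comp (B'.comp T)).comp A = ContinuousLinearMap.id ℂ H) := by
  simp only [← ContinuousLinearMap.mul_def, ← ContinuousLinearMap.one_def] at hS hT1 hT2 ⊢
  exact jn_ring A S T hS hT1 hT2
end

section
/- Fix α > −1 and a nonnegative integer k with −1 < α − 2k < 1, and fix 0 < λ₁ ≤ 1. Let f : (0, ∞) → ℂ be (k+1)-times continuously differentiable, supported in (0, λ₁], and suppose |f^{(j)}(λ)| ≤ M λ^{α−j} for all 0 ≤ j ≤ k+1 and all λ > 0. Then there is a constant C, depending only on α, k and λ₁ (not on f or t), such that for all real t ≠ 0: | ∫₀^∞ e^{i t λ²} f(λ) dλ | ≤ C M |t|^{−(α+1)/2}. -/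
/-!
Split the integral at `a = |t|^(-1/2)`. On `(0, a]` the bound `|f(λ)| ≤ M λ^α` alone gives
`M a^(α+1) / (α+1)`. On `[a, ∞)` write `e^{itλ²} = (e^{itλ²})' / (2itλ)` and integrate by parts
`k + 1` times: after `j` steps the integrand is `e^{itλ²} (2it)^{-j} f_j`, where `f_j` is the
`j`-th iterate of `g ↦ (g(λ)/λ)'` and `|f_j(λ)| ≲ M λ^(α-2j)`. As `|t| a² = 1`, every boundary
term at `a` is `≲ M a^(α+1)`, and so is the remainder, whose integrand is `≲ M |t|^{-(k+1)}
λ^(α-2k-2)`, integrable at infinity because `α - 2k < 1`.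
-/

open MeasureTheory Complex Real Set

/-- The recursion comes from
`(x ^ (i-2j-1) f⁽ⁱ⁾)' = (i-2j-1) x ^ (i-2j-2) f⁽ⁱ⁾ + x ^ (i-2j-1) f⁽ⁱ⁺¹⁾`. -/
def ibpCoeff : ℕ → ℕ → ℤ
  | 0, 0 => 1
  | 0, _ + 1 => 0
  | j + 1, 0 => -(2 * j + 1) * ibpCoeff j 0
  | j + 1, i + 1 => (i - 2 * j) * ibpCoeff j (i + 1) + ibpCoeff j i

lemma ibpCoeff_eq_zero_of_lt : ∀ {j i : ℕ}, j < i → ibpCoeff j i = 0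
  | 0, _ + 1, _ => rfl
  | j + 1, i + 1, h => by
    simp [ibpCoeff, ibpCoeff_eq_zero_of_lt (Nat.lt_of_succ_lt_succ h),
      ibpCoeff_eq_zero_of_lt (Nat.lt_of_succ_lt h)]

lemma sum_ibpCoeff_succ {R : Type*} [CommRing R] (j : ℕ) (h : ℕ → R) :
    ∑ i ∈ Finset.range (j + 2), (ibpCoeff (j + 1) i : R) * h i =
      ∑ i ∈ Finset.range (j + 1),
        (ibpCoeff j i : R) * (((i : R) - 2 * j - 1) * h i + h (i + 1)) := by
  have hshift : ∑ i ∈ Finset.range (j + 1), (ibpCoeff (j + 1) (i + 1) : R) * h (i + 1) =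
      ∑ i ∈ Finset.range (j + 1), ((ibpCoeff j (i + 1) : R) * ((((i + 1 : ℕ) : R) - 2 * j - 1) *
        h (i + 1)) + (ibpCoeff j i : R) * h (i + 1)) :=
    Finset.sum_congr rfl fun i _ => by simp only [ibpCoeff]; push_cast; ring
  have hlast : ∑ i ∈ Finset.range (j + 1), (ibpCoeff j i : R) * ((i - 2 * j - 1) * h i) =
      ∑ i ∈ Finset.range (j + 2), (ibpCoeff j i : R) * ((i - 2 * j - 1) * h i) := by
    rw [Finset.sum_range_succ _ (j + 1), ibpCoeff_eq_zero_of_lt (Nat.lt_succ_self j)]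
    simp
  simp only [mul_add, Finset.sum_add_distrib, hlast]
  rw [Finset.sum_range_succ', Finset.sum_range_succ' _ (j + 1), hshift, Finset.sum_add_distrib]
  have h0 : (ibpCoeff (j + 1) 0 : R) = ibpCoeff j 0 * (((0 : ℕ) : R) - 2 * j - 1) := by
    simp only [ibpCoeff]; push_cast; ring
  rw [h0]
  ring

/-- The `j`-th iterate of `g ↦ (x ↦ g x / x)'` applied to `f` (`hasDerivAt_derivDivIter_div`),
with derivatives taken within `(0, ∞)`. -/
noncomputable def derivDivIter (f : ℝ → ℂ) (j : ℕ) (x : ℝ) : ℂ :=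
  ∑ i ∈ Finset.range (j + 1),
    (ibpCoeff j i : ℂ) * (x : ℂ) ^ ((i : ℤ) - 2 * j) * iteratedDerivWithin i f (Ioi 0) x

@[simp]
lemma derivDivIter_zero (f : ℝ → ℂ) : derivDivIter f 0 = f := by
  ext x
  simp [derivDivIter, ibpCoeff]

lemma ContDiffOn.hasDerivAt_iteratedDerivWithin {f : ℝ → ℂ} {s : Set ℝ} {n i : ℕ}
    (hf : ContDiffOn ℝ n f s) (hs : IsOpen s) (hi : i < n) {x : ℝ} (hx : x ∈ s) :
    HasDerivAt (iteratedDerivWithin i f s) (iteratedDerivWithin (i + 1) f s x) x := by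
  have hdiff := hf.differentiableOn_iteratedDerivWithin (by exact_mod_cast hi) hs.uniqueDiffOn
  rw [iteratedDerivWithin_succ, derivWithin_of_isOpen hs hx]
  exact ((hdiff x hx).differentiableAt (hs.mem_nhds hx)).hasDerivAt

lemma hasDerivAt_derivDivIter_div {f : ℝ → ℂ} {n j : ℕ} (hf : ContDiffOn ℝ n f (Ioi 0))
    (hj : j < n) {x : ℝ} (hx : 0 < x) :
    HasDerivAt (fun y : ℝ => derivDivIter f j y / y) (derivDivIter f (j + 1) x) x := by
  set F : ℕ → ℝ → ℂ := fun i => iteratedDerivWithin i f (Ioi 0)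
  have hterm : ∀ i ∈ Finset.range (j + 1),
      HasDerivAt (fun y : ℝ => (ibpCoeff j i : ℂ) * ((y : ℂ) ^ ((i : ℤ) - 2 * j - 1) * F i y))
        ((ibpCoeff j i : ℂ) * ((((i : ℤ) - 2 * j - 1 : ℤ) : ℂ) * (x : ℂ) ^ ((i : ℤ) - 2 * j - 1 - 1)
          * F i x + (x : ℂ) ^ ((i : ℤ) - 2 * j - 1) * F (i + 1) x)) x := fun i hi =>
    (((hasDerivAt_zpow _ (x : ℂ) (Or.inl (ofReal_ne_zero.2 hx.ne'))).comp_ofReal).mul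
      (hf.hasDerivAt_iteratedDerivWithin isOpen_Ioi
        ((Finset.mem_range_succ_iff.1 hi).trans_lt hj) hx)).const_mul _
  have hquot : (fun y : ℝ => derivDivIter f j y / y) =ᶠ[nhds x] fun y =>
      ∑ i ∈ Finset.range (j + 1),
        (ibpCoeff j i : ℂ) * ((y : ℂ) ^ ((i : ℤ) - 2 * j - 1) * F i y) := by
    filter_upwards [Ioi_mem_nhds hx] with y hy
    rw [derivDivIter, Finset.sum_div]
    refine Finset.sum_congr rfl fun i _ => ?_
    rw [zpow_sub_one₀ (ofReal_ne_zero.2 (ne_of_gt hy))]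
    ring
  refine (HasDerivAt.fun_sum hterm).congr_of_eventuallyEq hquot |>.congr_deriv ?_
  set h : ℕ → ℂ := fun i => (x : ℂ) ^ ((i : ℤ) - 2 * ((j + 1 : ℕ) : ℤ)) * F i x
  calc _ = ∑ i ∈ Finset.range (j + 1),
        (ibpCoeff j i : ℂ) * (((i : ℂ) - 2 * j - 1) * h i + h (i + 1)) :=
        Finset.sum_congr rfl fun i _ => by simp only [h]; push_cast; ring_nf
    _ = ∑ i ∈ Finset.range (j + 2), (ibpCoeff (j + 1) i : ℂ) * h i := (sum_ibpCoeff_succ j h).symm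
    _ = derivDivIter f (j + 1) x := Finset.sum_congr rfl fun i _ => by simp only [h, F]; ring

lemma iteratedDerivWithin_eq_zero_of_forall_gt {f : ℝ → ℂ} {s : Set ℝ} {c x : ℝ}
    (hf : ∀ y, c < y → f y = 0) (hx : c < x) (i : ℕ) :
    iteratedDerivWithin i f s x = 0 := by
  have hev : f =ᶠ[nhdsWithin x s] fun _ => 0 :=
    eventually_nhdsWithin_of_eventually_nhds (eventually_gt_nhds hx |>.mono hf)
  rw [iteratedDerivWithin, hev.iteratedFDerivWithin_eq (hf x hx), iteratedFDerivWithin_fun_zero]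
  rfl

lemma derivDivIter_eq_zero_of_forall_gt {f : ℝ → ℂ} {c x : ℝ}
    (hf : ∀ y, c < y → f y = 0) (hx : c < x) (j : ℕ) : derivDivIter f j x = 0 :=
  Finset.sum_eq_zero fun i _ => by rw [iteratedDerivWithin_eq_zero_of_forall_gt hf hx, mul_zero]

lemma continuousOn_derivDivIter {f : ℝ → ℂ} {n j : ℕ} (hf : ContDiffOn ℝ n f (Ioi 0))
    (hj : j ≤ n) : ContinuousOn (derivDivIter f j) (Ioi 0) := by
  refine continuousOn_finsetSum _ fun i hi => ContinuousOn.mul ?_ ?_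
  · refine continuousOn_const.mul fun y hy => ?_
    exact ((continuousAt_zpow₀ _ _ (Or.inl (ofReal_ne_zero.2 (ne_of_gt hy)))).comp
      continuous_ofReal.continuousAt).continuousWithinAt
  · exact hf.continuousOn_iteratedDerivWithin
      (by exact_mod_cast (Finset.mem_range_succ_iff.1 hi).trans hj) (uniqueDiffOn_Ioi 0)

noncomputable def ibpConst (j : ℕ) : ℝ := ∑ i ∈ Finset.range (j + 1), |(ibpCoeff j i : ℝ)|

lemma ibpConst_nonneg (j : ℕ) : 0 ≤ ibpConst j :=
  Finset.sum_nonneg fun _ _ => abs_nonneg _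

lemma norm_derivDivIter_le {f : ℝ → ℂ} {α M : ℝ} {j : ℕ}
    (hder : ∀ i ≤ j, ∀ x, 0 < x → ‖iteratedDerivWithin i f (Ioi 0) x‖ ≤ M * x ^ (α - i))
    {x : ℝ} (hx : 0 < x) : ‖derivDivIter f j x‖ ≤ ibpConst j * M * x ^ (α - 2 * j) := by
  rw [ibpConst, Finset.sum_mul, Finset.sum_mul]
  refine norm_sum_le_of_le _ fun i hi => ?_
  have hpow : ‖(x : ℂ) ^ ((i : ℤ) - 2 * j)‖ * x ^ (α - i) = x ^ (α - 2 * j) := by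
    rw [norm_zpow, norm_real, Real.norm_of_nonneg hx.le, ← Real.rpow_intCast,
      ← Real.rpow_add hx]
    push_cast
    ring_nf
  calc ‖(ibpCoeff j i : ℂ) * (x : ℂ) ^ ((i : ℤ) - 2 * j) * iteratedDerivWithin i f (Ioi 0) x‖
      ≤ |(ibpCoeff j i : ℝ)| * ‖(x : ℂ) ^ ((i : ℤ) - 2 * j)‖ * (M * x ^ (α - i)) := by
        rw [norm_mul, norm_mul, norm_intCast]
        gcongr
        exact hder i (Finset.mem_range_succ_iff.1 hi) x hx
    _ = |(ibpCoeff j i : ℝ)| * M * x ^ (α - 2 * j) := by rw [← hpow]; ring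

lemma norm_cexp_I_mul_sq (t x : ℝ) : ‖cexp (I * t * (x : ℂ) ^ 2)‖ = 1 := by
  rw [show I * t * (x : ℂ) ^ 2 = ((t * x ^ 2 : ℝ) : ℂ) * I by push_cast; ring]
  exact norm_exp_ofReal_mul_I _

lemma hasDerivAt_cexp_I_mul_sq_div {t : ℝ} (ht : t ≠ 0) (x : ℝ) :
    HasDerivAt (fun y : ℝ => cexp (I * t * (y : ℂ) ^ 2) / (2 * I * t))
      (x * cexp (I * t * (x : ℂ) ^ 2)) x := by
  have h := (((hasDerivAt_pow 2 (x : ℂ)).const_mul (I * t)).comp_ofReal.cexp).div_const (2 * I * t)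
  refine h.congr_deriv ?_
  field_simp [ht, I_ne_zero]
  ring

lemma integral_cexp_mul_derivDivIter {f : ℝ → ℂ} {n j : ℕ} (hf : ContDiffOn ℝ n f (Ioi 0))
    (hj : j < n) {t a b : ℝ} (ht : t ≠ 0) (ha : 0 < a) (hab : a ≤ b)
    (hb : derivDivIter f j b = 0) :
    ∫ x in a..b, cexp (I * t * (x : ℂ) ^ 2) * derivDivIter f j x =
      -(2 * I * t)⁻¹ * (cexp (I * t * (a : ℂ) ^ 2) * derivDivIter f j a / a +
        ∫ x in a..b, cexp (I * t * (x : ℂ) ^ 2) * derivDivIter f (j + 1) x) := by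
  have hpos : ∀ x ∈ uIcc a b, 0 < x := fun x hx => ha.trans_le (uIcc_of_le hab ▸ hx).1
  have hibp := intervalIntegral.integral_mul_deriv_eq_deriv_mul
    (fun x hx => hasDerivAt_derivDivIter_div hf hj (hpos x hx))
    (fun x _ => hasDerivAt_cexp_I_mul_sq_div ht x)
    ((continuousOn_derivDivIter hf hj).mono hpos).intervalIntegrable
    ((by fun_prop : Continuous fun x : ℝ => (x : ℂ) * cexp (I * t * (x : ℂ) ^ 2)).intervalIntegrable
      a b)
  have hlhs : ∫ x in a..b, derivDivIter f j x / x * (x * cexp (I * t * (x : ℂ) ^ 2)) =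
      ∫ x in a..b, cexp (I * t * (x : ℂ) ^ 2) * derivDivIter f j x :=
    intervalIntegral.integral_congr fun x hx => by
      field_simp [ofReal_ne_zero.2 (hpos x hx).ne']
  have hrhs : ∫ x in a..b, derivDivIter f (j + 1) x * (cexp (I * t * (x : ℂ) ^ 2) / (2 * I * t)) =
      (2 * I * t)⁻¹ * ∫ x in a..b, cexp (I * t * (x : ℂ) ^ 2) * derivDivIter f (j + 1) x := by
    rw [← intervalIntegral.integral_const_mul]
    exact intervalIntegral.integral_congr fun x _ => by ring
  rw [← hlhs, hibp, hb, hrhs]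
  ring

lemma norm_integral_cexp_mul_le {f : ℝ → ℂ} {t a b : ℝ} (ht : t ≠ 0) (ha : 0 < a)
    (hab : a ≤ b) (hb : ∀ j, derivDivIter f j b = 0) :
    ∀ {n : ℕ}, ContDiffOn ℝ n f (Ioi 0) →
      ‖∫ x in a..b, cexp (I * t * (x : ℂ) ^ 2) * f x‖ ≤
        ∑ j ∈ Finset.range n, (2 * |t|)⁻¹ ^ (j + 1) * ‖derivDivIter f j a‖ / a +
          (2 * |t|)⁻¹ ^ n * ‖∫ x in a..b, cexp (I * t * (x : ℂ) ^ 2) * derivDivIter f n x‖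
  | 0, _ => by simp
  | n + 1, hf => by
    have hstep : ‖∫ x in a..b, cexp (I * t * (x : ℂ) ^ 2) * derivDivIter f n x‖ ≤
        (2 * |t|)⁻¹ * (‖derivDivIter f n a‖ / a +
          ‖∫ x in a..b, cexp (I * t * (x : ℂ) ^ 2) * derivDivIter f (n + 1) x‖) := by
      rw [integral_cexp_mul_derivDivIter hf (Nat.lt_succ_self n) ht ha hab (hb n), norm_mul,
        norm_neg, norm_inv, norm_mul, norm_mul, norm_I, Complex.norm_two, norm_real, norm_eq_abs,
        mul_one]
      gcongr
      refine (norm_add_le _ _).trans ?_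
      rw [norm_div, norm_mul, norm_cexp_I_mul_sq, one_mul, norm_real, norm_of_nonneg ha.le]
    refine (norm_integral_cexp_mul_le (n := n) ht ha hab hb
      (hf.of_le (by exact_mod_cast n.le_succ))).trans ?_
    rw [Finset.sum_range_succ, add_assoc]
    gcongr
    calc (2 * |t|)⁻¹ ^ n * ‖∫ x in a..b, cexp (I * t * (x : ℂ) ^ 2) * derivDivIter f n x‖
        ≤ (2 * |t|)⁻¹ ^ n * ((2 * |t|)⁻¹ * (‖derivDivIter f n a‖ / a +
          ‖∫ x in a..b, cexp (I * t * (x : ℂ) ^ 2) * derivDivIter f (n + 1) x‖)) := by gcongr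
      _ = _ := by ring

lemma integral_rpow_le_of_lt_neg_one {p a b : ℝ} (hp : p < -1) (ha : 0 < a) (hab : a ≤ b) :
    ∫ x in a..b, x ^ p ≤ a ^ (p + 1) / -(p + 1) := by
  have h0 : (0 : ℝ) ∉ uIcc a b := fun h => (ha.trans_le (uIcc_of_le hab ▸ h).1).false
  rw [integral_rpow (Or.inr ⟨hp.ne, h0⟩), ← neg_div_neg_eq, neg_sub]
  gcongr
  · linarith
  · exact sub_le_self _ (rpow_pos_of_pos (ha.trans_le hab) _).le

lemma norm_integral_le_of_norm_le_rpow {g : ℝ → ℂ} {α M a : ℝ} (hα : -1 < α) (ha : 0 ≤ a)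
    (hg : ∀ x, 0 < x → ‖g x‖ ≤ M * x ^ α) : ‖∫ x in 0..a, g x‖ ≤ M * a ^ (α + 1) / (α + 1) := by
  refine (intervalIntegral.norm_integral_le_of_norm_le ha (ae_of_all _ fun x hx => hg x hx.1)
    ((intervalIntegral.intervalIntegrable_rpow' hα).const_mul M)).trans_eq ?_
  rw [intervalIntegral.integral_const_mul, integral_rpow (Or.inl hα),
    zero_rpow (by linarith : α + 1 ≠ 0), sub_zero, mul_div_assoc]

lemma intervalIntegrable_of_norm_le_rpow {g : ℝ → ℂ} {α M b : ℝ} (hα : -1 < α) (hb : 0 ≤ b)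
    (hgc : ContinuousOn g (Ioi 0)) (hg : ∀ x, 0 < x → ‖g x‖ ≤ M * x ^ α) :
    IntervalIntegrable g volume 0 b := by
  refine ((intervalIntegral.intervalIntegrable_rpow' hα).const_mul M).mono_fun' ?_ ?_
  · rw [uIoc_of_le hb]
    exact (hgc.mono Ioc_subset_Ioi_self).aestronglyMeasurable measurableSet_Ioc
  · rw [uIoc_of_le hb]
    exact (ae_restrict_iff' measurableSet_Ioc).2 (ae_of_all _ fun x hx => hg x hx.1)

lemma setIntegral_Ioi_eq_intervalIntegral_add {g : ℝ → ℂ} {α M a b : ℝ} (hα : -1 < α)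
    (ha : 0 ≤ a) (hab : a ≤ b) (hgc : ContinuousOn g (Ioi 0))
    (hg : ∀ x, 0 < x → ‖g x‖ ≤ M * x ^ α) (hgb : ∀ x, b < x → g x = 0) :
    ∫ x in Ioi 0, g x = (∫ x in 0..a, g x) + ∫ x in a..b, g x := by
  have hint := intervalIntegrable_of_norm_le_rpow hα (ha.trans hab) hgc hg
  rw [intervalIntegral.integral_add_adjacent_intervals
      (hint.mono_set (uIcc_subset_uIcc_left (mem_uIcc_of_le ha hab)))
      (hint.mono_set (uIcc_subset_uIcc_right (mem_uIcc_of_le ha hab))),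
    intervalIntegral.integral_of_le (ha.trans hab)]
  exact setIntegral_eq_of_subset_of_forall_sdiff_eq_zero measurableSet_Ioi Ioc_subset_Ioi_self
    fun x hx => hgb x (not_le.1 fun h => hx.2 ⟨hx.1, h⟩)

lemma sq_pow_mul_rpow {a : ℝ} (ha : 0 < a) (m : ℕ) (γ : ℝ) :
    (a ^ 2) ^ m * a ^ γ = a ^ (γ + 2 * m) := by
  rw [← pow_mul, ← rpow_natCast, ← rpow_add ha]
  push_cast
  ring_nf

lemma sq_div_two_pow_mul_norm_derivDivIter_le {f : ℝ → ℂ} {α M a : ℝ} {j : ℕ}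
    (hder : ∀ i ≤ j, ∀ x, 0 < x → ‖iteratedDerivWithin i f (Ioi 0) x‖ ≤ M * x ^ (α - i))
    (ha : 0 < a) :
    (a ^ 2 / 2) ^ (j + 1) * ‖derivDivIter f j a‖ / a ≤
      ibpConst j / 2 ^ (j + 1) * M * a ^ (α + 1) :=
  calc (a ^ 2 / 2) ^ (j + 1) * ‖derivDivIter f j a‖ / a
      ≤ (a ^ 2 / 2) ^ (j + 1) * (ibpConst j * M * a ^ (α - 2 * j)) / a := by
        gcongr
        exact norm_derivDivIter_le hder ha
    _ = ibpConst j / 2 ^ (j + 1) * M * ((a ^ 2) ^ (j + 1) * a ^ (α - 2 * j - 1)) := by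
        rw [rpow_sub_one ha.ne', div_pow]
        ring
    _ = ibpConst j / 2 ^ (j + 1) * M * a ^ (α + 1) := by
        rw [sq_pow_mul_rpow ha]
        push_cast
        ring_nf

lemma sq_div_two_pow_mul_norm_integral_cexp_mul_derivDivIter_le {f : ℝ → ℂ} {α M t a b : ℝ}
    {k : ℕ} (hαk : α < 2 * k + 1) (hM : 0 ≤ M)
    (hder : ∀ i ≤ k + 1, ∀ x, 0 < x → ‖iteratedDerivWithin i f (Ioi 0) x‖ ≤ M * x ^ (α - i))
    (ha : 0 < a) (hab : a ≤ b) :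
    (a ^ 2 / 2) ^ (k + 1) *
        ‖∫ x in a..b, cexp (I * t * (x : ℂ) ^ 2) * derivDivIter f (k + 1) x‖ ≤
      ibpConst (k + 1) / (2 ^ (k + 1) * (2 * k + 1 - α)) * M * a ^ (α + 1) := by
  set p : ℝ := α - 2 * ((k + 1 : ℕ) : ℝ)
  have hp : p < -1 := by simp only [p]; push_cast; linarith
  have hintegrand : ∀ x ∈ Ioc a b,
      ‖cexp (I * t * (x : ℂ) ^ 2) * derivDivIter f (k + 1) x‖ ≤ ibpConst (k + 1) * M * x ^ p :=
    fun x hx => by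
      rw [norm_mul, norm_cexp_I_mul_sq, one_mul]
      exact norm_derivDivIter_le hder (ha.trans hx.1)
  have hcont : ContinuousOn (fun x => ibpConst (k + 1) * M * x ^ p) (uIcc a b) := fun x hx =>
    (continuousAt_const.mul (continuousAt_rpow_const _ _
      (Or.inl (ha.trans_le (uIcc_of_le hab ▸ hx).1).ne'))).continuousWithinAt
  calc (a ^ 2 / 2) ^ (k + 1) *
        ‖∫ x in a..b, cexp (I * t * (x : ℂ) ^ 2) * derivDivIter f (k + 1) x‖
      ≤ (a ^ 2 / 2) ^ (k + 1) * (ibpConst (k + 1) * M * ∫ x in a..b, x ^ p) := by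
        rw [← intervalIntegral.integral_const_mul]
        gcongr
        exact intervalIntegral.norm_integral_le_of_norm_le hab (ae_of_all _ hintegrand)
          hcont.intervalIntegrable
    _ ≤ (a ^ 2 / 2) ^ (k + 1) * (ibpConst (k + 1) * M * (a ^ (p + 1) / -(p + 1))) := by
        have := ibpConst_nonneg (k + 1)
        gcongr
        exact integral_rpow_le_of_lt_neg_one hp ha hab
    _ = ibpConst (k + 1) / (2 ^ (k + 1) * (2 * k + 1 - α)) * M *
        ((a ^ 2) ^ (k + 1) * a ^ (p + 1)) := by
        have hden : -(p + 1) = 2 * k + 1 - α := by simp only [p]; push_cast; ring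
        have hpos : 0 < 2 * (k : ℝ) + 1 - α := by linarith
        rw [hden, div_pow]
        field_simp
    _ = ibpConst (k + 1) / (2 ^ (k + 1) * (2 * k + 1 - α)) * M * a ^ (α + 1) := by
        rw [sq_pow_mul_rpow ha]
        simp only [p]
        push_cast
        ring_nf

noncomputable def farConst (α : ℝ) (k : ℕ) : ℝ :=
  ∑ j ∈ Finset.range (k + 1), ibpConst j / 2 ^ (j + 1) +
    ibpConst (k + 1) / (2 ^ (k + 1) * (2 * k + 1 - α))

lemma farConst_nonneg {α : ℝ} {k : ℕ} (hαk : α < 2 * k + 1) : 0 ≤ farConst α k := by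
  have hden := sub_pos.2 hαk
  exact add_nonneg (Finset.sum_nonneg fun j _ => div_nonneg (ibpConst_nonneg j) (by positivity))
    (div_nonneg (ibpConst_nonneg _) (by positivity))

lemma norm_integral_cexp_mul_le_farConst {f : ℝ → ℂ} {α M t a b : ℝ} {k : ℕ}
    (hαk : α < 2 * k + 1) (hM : 0 ≤ M) (hf : ContDiffOn ℝ (k + 1) f (Ioi 0))
    (hder : ∀ i ≤ k + 1, ∀ x, 0 < x → ‖iteratedDerivWithin i f (Ioi 0) x‖ ≤ M * x ^ (α - i))
    (ha : 0 < a) (hab : a ≤ b) (hb : ∀ j, derivDivIter f j b = 0) (hta : |t| * a ^ 2 = 1) :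
    ‖∫ x in a..b, cexp (I * t * (x : ℂ) ^ 2) * f x‖ ≤ farConst α k * M * a ^ (α + 1) := by
  have ht : t ≠ 0 := by rintro rfl; simp at hta
  have h2t : (2 * |t|)⁻¹ = a ^ 2 / 2 := by field_simp; linarith
  refine (norm_integral_cexp_mul_le ht ha hab hb (n := k + 1) (by exact_mod_cast hf)).trans ?_
  rw [h2t, farConst, add_mul, add_mul, Finset.sum_mul, Finset.sum_mul]
  refine add_le_add (Finset.sum_le_sum fun j hj => ?_)
    (sq_div_two_pow_mul_norm_integral_cexp_mul_derivDivIter_le hαk hM hder ha hab)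
  exact sq_div_two_pow_mul_norm_derivDivIter_le
    (fun i hi => hder i (hi.trans (Finset.mem_range_succ_iff.1 hj |>.trans k.le_succ))) ha

theorem oscillatory_integral_fractional_bound_general (α : ℝ) (k : ℕ) (hα : -1 < α)
    (hαk2 : α - 2 * (k : ℝ) < 1)
    (lam1 : ℝ) :
    ∃ C : ℝ, 0 < C ∧ ∀ (f : ℝ → ℂ) (M : ℝ),
      ContDiffOn ℝ (k + 1) f (Set.Ioi (0 : ℝ)) →
      (∀ lam : ℝ, lam ∉ Set.Ioc (0 : ℝ) lam1 → f lam = 0) →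
      (∀ j : ℕ, j ≤ k + 1 → ∀ lam : ℝ, 0 < lam →
        ‖iteratedDerivWithin j f (Set.Ioi (0 : ℝ)) lam‖ ≤ M * lam ^ (α - (j : ℝ))) →
      ∀ t : ℝ, t ≠ 0 →
        ‖∫ lam in Set.Ioi (0 : ℝ), Complex.exp (Complex.I * (t : ℂ) * (lam : ℂ) ^ 2) * f lam‖ ≤
          C * M * |t| ^ (-((α + 1) / 2)) := by
  have hαk : α < 2 * k + 1 := by linarith
  refine ⟨1 / (α + 1) + farConst α k, add_pos_of_pos_of_nonneg (by simp; linarith)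
    (farConst_nonneg hαk), fun f M hf hsupp hder t ht => ?_⟩
  have hM : 0 ≤ M := by simpa using (norm_nonneg _).trans (hder 0 (Nat.zero_le _) 1 one_pos)
  have hEf : ∀ x : ℝ, 0 < x → ‖cexp (I * t * (x : ℂ) ^ 2) * f x‖ ≤ M * x ^ α := fun x hx => by
    simpa [norm_cexp_I_mul_sq] using hder 0 (Nat.zero_le _) x hx
  set a := |t| ^ (-(1 / 2) : ℝ)
  have ha : 0 < a := rpow_pos_of_pos (abs_pos.2 ht) _
  have hta : |t| * a ^ 2 = 1 := by
    rw [← rpow_natCast, ← rpow_mul (abs_nonneg t)]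
    norm_num [rpow_neg_one, ht]
  have haα : a ^ (α + 1) = |t| ^ (-((α + 1) / 2)) := by
    rw [← rpow_mul (abs_nonneg t)]
    ring_nf
  set b := max lam1 a + 1 with hb
  have hvan : ∀ x, b - 1 < x → f x = 0 := fun x hx =>
    hsupp x fun h => by linarith [h.2, le_max_left lam1 a]
  have hab : a ≤ b := by linarith [le_max_right lam1 a]
  have hEfc : ContinuousOn (fun x : ℝ => cexp (I * t * (x : ℂ) ^ 2) * f x) (Ioi 0) :=
    (by fun_prop : Continuous fun x : ℝ => cexp (I * t * (x : ℂ) ^ 2)).continuousOn.mul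
      hf.continuousOn
  rw [setIntegral_Ioi_eq_intervalIntegral_add hα ha.le hab hEfc hEf
    fun x hx => by rw [hvan x (by linarith), mul_zero]]
  calc _ ≤ M * a ^ (α + 1) / (α + 1) + farConst α k * M * a ^ (α + 1) :=
        (norm_add_le _ _).trans <| add_le_add (norm_integral_le_of_norm_le_rpow hα ha.le hEf)
          (norm_integral_cexp_mul_le_farConst hαk hM hf hder ha hab
            (fun j => derivDivIter_eq_zero_of_forall_gt hvan (by linarith) j) hta)
    _ = _ := by rw [haα]; ring

/-- Lemma 6.3 of the paper: if `f` is supported in `(0, λ₁]`, is `(k+1)`-times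
continuously differentiable on `(0,∞)` with `|f^{(j)}(λ)| ≤ M λ^{α−j}` for `0 ≤ j ≤ k+1`,
where `−1 < α` and `−1 < α − 2k < 1`, then `|∫₀^∞ e^{itλ²} f(λ) dλ| ≤ C M |t|^{−(α+1)/2}`
with `C` depending only on `α`, `k` and `λ₁`. -/
theorem oscillatory_integral_fractional_bound (α : ℝ) (k : ℕ) (hα : -1 < α)
    (hαk1 : -1 < α - 2 * (k : ℝ)) (hαk2 : α - 2 * (k : ℝ) < 1)
    (lam1 : ℝ) (hl0 : 0 < lam1) (hl1 : lam1 ≤ 1) :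
    ∃ C : ℝ, 0 < C ∧ ∀ (f : ℝ → ℂ) (M : ℝ),
      ContDiffOn ℝ (k + 1) f (Set.Ioi (0 : ℝ)) →
      (∀ lam : ℝ, lam ∉ Set.Ioc (0 : ℝ) lam1 → f lam = 0) →
      (∀ j : ℕ, j ≤ k + 1 → ∀ lam : ℝ, 0 < lam →
        ‖iteratedDerivWithin j f (Set.Ioi (0 : ℝ)) lam‖ ≤ M * lam ^ (α - (j : ℝ))) →
      ∀ t : ℝ, t ≠ 0 →
        ‖∫ lam in Set.Ioi (0 : ℝ), Complex.exp (Complex.I * (t : ℂ) * (lam : ℂ) ^ 2) * f lam‖ ≤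
          C * M * |t| ^ (-((α + 1) / 2)) :=
  oscillatory_integral_fractional_bound_general α k hα hαk2 lam1
end
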